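/- arXiv:1805.10957 — 7 statements merged into one kernel-verified Lean document; each statement's English description precedes it below -/
import Mathlib

section
/- In every arrangement of three circles {C1, C2, C3}, if one of the circles separates the two intersection points of the other two, then each of the three circles separates the two intersection points of the other two. Consequently, every arrangement of three circles is either Krupp or NonKrupp. -/
noncomputable section

/-- The Euclidean plane. -/
abbrev E2 := EuclideanSpace ℝ (Fin 2)

/-- The circle with center `c` and radius `r` separates the points `p` and `q`
(not lying on it) if exactly one of them lies in its open disk. -/
def Separates (c : E2) (r : ℝ) (p q : E2) : Prop :=
  Xor' (p ∈ Metric.ball c r) (q ∈ Metric.ball c r)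

/-- The circle with center `c`, radius `r` separates the two intersection points of the
circle with center `c₁`, radius `r₁` and the circle with center `c₂`, radius `r₂`. -/
def SepInt (c : E2) (r : ℝ) (c₁ : E2) (r₁ : ℝ) (c₂ : E2) (r₂ : ℝ) : Prop :=
  ∀ p q : E2, p ≠ q → Metric.sphere c₁ r₁ ∩ Metric.sphere c₂ r₂ = {p, q} →
    Separates c r p q

/-- The circle with center `c`, radius `r` does not separate the two intersection points of
the other two circles. -/
def NonSepInt (c : E2) (r : ℝ) (c₁ : E2) (r₁ : ℝ) (c₂ : E2) (r₂ : ℝ) : Prop :=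
  ∀ p q : E2, p ≠ q → Metric.sphere c₁ r₁ ∩ Metric.sphere c₂ r₂ = {p, q} →
    ¬ Separates c r p q

/-!
Everything is read off the power of a point. Let `p ≠ q` be the intersection points of circles
`a` and `b`, and `c` the third circle; `c` separates `p` and `q` iff
`pow_c p * pow_c q < 0`. On the chord `pq` the difference `pow_c - pow_a` is affine with end
values `pow_c p`, `pow_c q`, and `pow_a = pow_b = t (t - 1) ‖q - p‖²`. So if `c` separates
`p, q`, the zero of `pow_c - pow_a` is a point strictly inside the chord with the same negative
power for all three circles. Conversely, such a point `z` of common power `k < 0` lies on the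
radical axis `pq` of `a` and `b` (here the plane is used), and
`pow_c p * pow_c q * ‖q - p‖² = k * (2 ⟪c_a - c_c, q - p⟫)²`
makes `pow_c p * pow_c q` negative. So each circle separates the intersection points of the
other two iff the three circles have a common point of equal negative power, a condition
symmetric in the three circles.
-/

open EuclideanGeometry Module
open scoped RealInnerProductSpace

variable {V : Type*} [NormedAddCommGroup V] [InnerProductSpace ℝ V]

namespace EuclideanGeometry.Sphere

theorem power_sub_power_sub_power_sub_power (s s' : Sphere V) (x y : V) :
    s.power x - s'.power x - (s.power y - s'.power y) = 2 * ⟪s'.center - s.center, x - y⟫ := by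
  simp only [power, dist_eq_norm, norm_sub_sq_real, inner_sub_left, inner_sub_right,
    real_inner_comm]
  ring

theorem power_lineMap {s : Sphere V} {p q : V} (hp : p ∈ s) (hq : q ∈ s) (t : ℝ) :
    s.power (AffineMap.lineMap p q t) = t * (t - 1) * ‖q - p‖ ^ 2 := by
  rw [mem_sphere, dist_eq_norm] at hp hq
  have hq' : ‖(p - s.center) + (q - p)‖ ^ 2 = s.radius ^ 2 := by rw [← hq]; congr 2; abel
  have hz : AffineMap.lineMap p q t - s.center = (p - s.center) + t • (q - p) := by
    rw [AffineMap.lineMap_apply_module']; abel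
  rw [norm_add_sq_real, hp] at hq'
  rw [power, dist_eq_norm, hz, norm_add_sq_real, hp, inner_smul_right, norm_smul,
    Real.norm_eq_abs, mul_pow, sq_abs]
  linear_combination t * hq'

theorem power_eq_of_mem_affineSpan_pair {s s' : Sphere V} {p q z : V} (hp : p ∈ s) (hq : q ∈ s)
    (hp' : p ∈ s') (hq' : q ∈ s') (hz : z ∈ line[ℝ, p, q]) : s'.power z = s.power z := by
  obtain ⟨t, rfl⟩ := mem_affineSpan_pair_iff_exists_lineMap_eq.1 hz
  rw [power_lineMap hp hq, power_lineMap hp' hq']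

theorem power_sub_power_eq_of_mem {s s' : Sphere V} {p : V} (hp : p ∈ s) (x : V) :
    s'.power x - s.power x = s'.power p + 2 * ⟪s.center - s'.center, x - p⟫ := by
  have := power_sub_power_sub_power_sub_power s' s x p
  rw [(power_eq_zero_iff_mem_sphere (radius_nonneg_of_mem hp)).2 hp] at this
  linarith

theorem exists_power_eq_of_power_mul_power_neg {s s' : Sphere V} {p q : V} (hp : p ∈ s)
    (hq : q ∈ s) (h : s'.power p * s'.power q < 0) :
    ∃ z ∈ line[ℝ, p, q], s'.power z = s.power z ∧ s.power z < 0 := by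
  have hpq : q - p ≠ 0 := fun h' => by
    rw [sub_eq_zero] at h'
    subst h'
    nlinarith [mul_self_nonneg (s'.power q)]
  have hb := power_sub_power_eq_of_mem (s' := s') hp q
  rw [(power_eq_zero_iff_mem_sphere (radius_nonneg_of_mem hq)).2 hq, sub_zero] at hb
  have hline : ∀ t : ℝ, s'.power (AffineMap.lineMap p q t) - s.power (AffineMap.lineMap p q t) =
      s'.power p + t * (s'.power q - s'.power p) := fun t => by
    rw [power_sub_power_eq_of_mem hp, AffineMap.lineMap_apply_module', add_sub_cancel_right,
      inner_smul_right, hb]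
    ring
  generalize s'.power p = a, s'.power q = b at h hline
  have hab : a - b ≠ 0 := fun h' => by
    rw [sub_eq_zero] at h'
    subst h'
    nlinarith [mul_self_nonneg a]
  refine ⟨AffineMap.lineMap p q (a / (a - b)), AffineMap.lineMap_mem_affineSpan_pair _ p q, ?_, ?_⟩
  · rw [← sub_eq_zero, hline]
    field_simp
    ring
  · have ht : a / (a - b) * (a / (a - b) - 1) = a * b / (a - b) ^ 2 := by
      field_simp
      ring
    rw [power_lineMap hp hq, ht]
    exact mul_neg_of_neg_of_pos (div_neg_of_neg_of_pos h (by positivity)) (by positivity)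

theorem power_mul_power_mul_norm_sq {s s' : Sphere V} {p q z : V} (hp : p ∈ s) (hq : q ∈ s)
    (hz : z ∈ line[ℝ, p, q]) (hzs : s'.power z = s.power z) :
    s'.power p * s'.power q * ‖q - p‖ ^ 2 =
      s.power z * (2 * ⟪s.center - s'.center, q - p⟫) ^ 2 := by
  have hs : ∀ x ∈ s, s'.power x = 2 * ⟪s.center - s'.center, x - z⟫ := fun x hx => by
    have := power_sub_power_eq_of_mem (s' := s') hx z
    rw [hzs, sub_self, ← neg_sub x, inner_neg_right] at this
    linarith
  obtain ⟨t, rfl⟩ := mem_affineSpan_pair_iff_exists_lineMap_eq.1 hz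
  rw [hs p hp, hs q hq, power_lineMap hp hq, AffineMap.lineMap_apply_module',
    show p - (t • (q - p) + p) = (-t) • (q - p) by module,
    show q - (t • (q - p) + p) = (1 - t) • (q - p) by module, inner_smul_right, inner_smul_right]
  ring

theorem power_mul_power_neg_of_power_neg {s s' : Sphere V} {p q z : V} (hp : p ∈ s)
    (hq : q ∈ s) (hpq : p ≠ q) (hz : z ∈ line[ℝ, p, q]) (hzs : s'.power z = s.power z)
    (hp' : s'.power p ≠ 0) (hq' : s'.power q ≠ 0) (hneg : s.power z < 0) :
    s'.power p * s'.power q < 0 := by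
  have key := power_mul_power_mul_norm_sq hp hq hz hzs
  have hpq' : 0 < ‖q - p‖ ^ 2 := by
    have := sub_ne_zero.2 hpq.symm
    positivity
  have hle : s'.power p * s'.power q * ‖q - p‖ ^ 2 ≤ 0 := by
    rw [key]
    exact mul_nonpos_of_nonpos_of_nonneg hneg.le (sq_nonneg _)
  exact lt_of_le_of_ne (nonpos_of_mul_nonpos_left hle hpq') (mul_ne_zero hp' hq')

end EuclideanGeometry.Sphere

section Plane

variable [Fact (finrank ℝ V = 2)]

theorem mem_affineSpan_pair_of_inner_sub_eq_zero {w p q z : V} (hw : w ≠ 0) (hpq : p ≠ q)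
    (hp : ⟪w, p - z⟫ = 0) (hq : ⟪w, q - z⟫ = 0) : z ∈ line[ℝ, p, q] := by
  have hK : finrank ℝ (ℝ ∙ w)ᗮ = 1 := Submodule.finrank_orthogonal_span_singleton hw
  have hqp : q - p ∈ (ℝ ∙ w)ᗮ := by
    rw [Submodule.mem_orthogonal_singleton_iff_inner_right, ← sub_sub_sub_cancel_right q p z,
      inner_sub_right, hp, hq, sub_zero]
  have hzp : z - p ∈ (ℝ ∙ w)ᗮ := by
    rw [Submodule.mem_orthogonal_singleton_iff_inner_right, ← neg_sub, inner_neg_right, hp,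
      neg_zero]
  obtain ⟨t, ht⟩ := (finrank_eq_one_iff_of_nonzero' (⟨q - p, hqp⟩ : (ℝ ∙ w)ᗮ)
    (by simpa [sub_eq_zero] using hpq.symm)).1 hK ⟨z - p, hzp⟩
  have ht : t • (q - p) = z - p := congrArg Subtype.val ht
  rw [← sub_add_cancel z p, ← ht, ← AffineMap.lineMap_apply_module']
  exact AffineMap.lineMap_mem_affineSpan_pair t p q

theorem mem_affineSpan_pair_of_power_eq {s s' : Sphere V} (hc : s.center ≠ s'.center)
    {p q z : V} (hpq : p ≠ q) (hp : p ∈ s) (hp' : p ∈ s') (hq : q ∈ s) (hq' : q ∈ s')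
    (hz : s'.power z = s.power z) : z ∈ line[ℝ, p, q] := by
  have hw : ∀ x ∈ s, x ∈ s' → ⟪s'.center - s.center, x - z⟫ = 0 := fun x hx hx' => by
    have := Sphere.power_sub_power_sub_power_sub_power s s' x z
    rw [(Sphere.power_eq_zero_iff_mem_sphere (Sphere.radius_nonneg_of_mem hx)).2 hx,
      (Sphere.power_eq_zero_iff_mem_sphere (Sphere.radius_nonneg_of_mem hx')).2 hx', hz] at this
    linarith
  exact mem_affineSpan_pair_of_inner_sub_eq_zero (sub_ne_zero.2 hc.symm) hpq (hw p hp hp')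
    (hw q hq hq')

theorem power_mul_power_neg_iff_exists_power_eq {s sa sb : Sphere V}
    (hab : sa.center ≠ sb.center) {p q : V} (hpq : p ≠ q) (hpa : p ∈ sa) (hpb : p ∈ sb)
    (hqa : q ∈ sa) (hqb : q ∈ sb) (hp : s.power p ≠ 0) (hq : s.power q ≠ 0) :
    s.power p * s.power q < 0 ↔
      ∃ z, ∃ k < 0, sa.power z = k ∧ sb.power z = k ∧ s.power z = k := by
  constructor
  · intro h
    obtain ⟨z, hz, hzs, hneg⟩ := Sphere.exists_power_eq_of_power_mul_power_neg hpa hqa h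
    exact ⟨z, _, hneg, rfl, Sphere.power_eq_of_mem_affineSpan_pair hpa hqa hpb hqb hz, hzs⟩
  · rintro ⟨z, k, hk, ha, hb, hs⟩
    have hz := mem_affineSpan_pair_of_power_eq hab hpq hpa hpb hqa hqb (hb.trans ha.symm)
    exact Sphere.power_mul_power_neg_of_power_neg hpa hqa hpq hz (hs.trans ha.symm) hp hq
      (ha ▸ hk)

end Plane

instance : Fact (finrank ℝ E2 = 2) := ⟨finrank_euclideanSpace_fin⟩

theorem separates_iff_power_mul_power_neg {c p q : E2} {r : ℝ} (hr : 0 ≤ r)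
    (hp : (Sphere.mk c r).power p ≠ 0) (hq : (Sphere.mk c r).power q ≠ 0) :
    Separates c r p q ↔ (Sphere.mk c r).power p * (Sphere.mk c r).power q < 0 := by
  have hball : ∀ x, x ∈ Metric.ball c r ↔ (Sphere.mk c r).power x < 0 := fun x =>
    (Sphere.power_neg_iff_dist_center_lt_radius (s := ⟨c, r⟩) hr).symm
  have hp' := not_lt.trans hp.symm.le_iff_lt
  have hq' := not_lt.trans hq.symm.le_iff_lt
  rw [Separates, Xor', xor_def, hball, hball, hp', hq', mul_neg_iff]
  tauto

theorem center_ne_of_inter_nonempty {α : Type*} [PseudoMetricSpace α] {c c' c'' : α} {r r' r'' : ℝ}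
    (h : (Metric.sphere c r ∩ Metric.sphere c' r').Nonempty)
    (h' : (Metric.sphere c r ∩ Metric.sphere c'' r'').Nonempty)
    (hno : ∀ x ∈ Metric.sphere c r ∩ Metric.sphere c' r', x ∉ Metric.sphere c'' r'') :
    c ≠ c' := by
  rintro rfl
  obtain ⟨p, hp, hp'⟩ := h
  obtain ⟨x, hx, hx''⟩ := h'
  have hr : r = r' := hp.symm.trans hp'
  exact hno x ⟨hx, hr ▸ hx⟩ hx''

theorem separates_iff_exists_power_eq {c ca cb : E2} {r ra rb : ℝ} (hr : 0 ≤ r)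
    (hno : ∀ x ∈ Metric.sphere ca ra ∩ Metric.sphere cb rb, x ∉ Metric.sphere c r)
    (hac : (Metric.sphere ca ra ∩ Metric.sphere c r).Nonempty)
    (p q : E2) (hpq : p ≠ q) (hset : Metric.sphere ca ra ∩ Metric.sphere cb rb = {p, q}) :
    Separates c r p q ↔ ∃ z, ∃ k < 0, (Sphere.mk ca ra).power z = k ∧
      (Sphere.mk cb rb).power z = k ∧ (Sphere.mk c r).power z = k := by
  obtain ⟨hp, hq⟩ := Set.pair_subset_iff.1 hset.ge
  have hne : ∀ x ∈ Metric.sphere ca ra ∩ Metric.sphere cb rb, (Sphere.mk c r).power x ≠ 0 :=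
    fun x hx h => hno x hx ((Sphere.power_eq_zero_iff_mem_sphere (s := ⟨c, r⟩) hr).1 h)
  rw [separates_iff_power_mul_power_neg hr (hne p hp) (hne q hq)]
  exact power_mul_power_neg_iff_exists_power_eq (s := ⟨c, r⟩) (sa := ⟨ca, ra⟩) (sb := ⟨cb, rb⟩)
    (center_ne_of_inter_nonempty ⟨p, hp⟩ hac hno) hpq hp.1 hp.2 hq.1 hq.2 (hne p hp) (hne q hq)

theorem sepInt_iff_and_nonSepInt_iff {c ca cb p q : E2} {r ra rb : ℝ} {P : Prop} (hpq : p ≠ q)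
    (hset : Metric.sphere ca ra ∩ Metric.sphere cb rb = {p, q})
    (h : ∀ p q : E2, p ≠ q → Metric.sphere ca ra ∩ Metric.sphere cb rb = {p, q} →
      (Separates c r p q ↔ P)) :
    (SepInt c r ca ra cb rb ↔ P) ∧ (NonSepInt c r ca ra cb rb ↔ ¬P) :=
  ⟨⟨fun hS => (h p q hpq hset).1 (hS p q hpq hset),
    fun hP p q hpq hset => (h p q hpq hset).2 hP⟩,
   ⟨fun hN hP => hN p q hpq hset ((h p q hpq hset).2 hP),
    fun hP p q hpq hset => (h p q hpq hset).not.2 hP⟩⟩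

/-- In every arrangement of three circles, if one of the circles separates the two
intersection points of the other two, then each of the three circles separates the two
intersection points of the other two.  Consequently, every arrangement of three circles
is either Krupp or NonKrupp. -/
theorem stmt0 (c₁ c₂ c₃ : E2) (r₁ r₂ r₃ : ℝ)
    (hr₁ : 0 < r₁) (hr₂ : 0 < r₂) (hr₃ : 0 < r₃)
    (h12 : ∃ p q : E2, p ≠ q ∧ Metric.sphere c₁ r₁ ∩ Metric.sphere c₂ r₂ = {p, q})
    (h13 : ∃ p q : E2, p ≠ q ∧ Metric.sphere c₁ r₁ ∩ Metric.sphere c₃ r₃ = {p, q})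
    (h23 : ∃ p q : E2, p ≠ q ∧ Metric.sphere c₂ r₂ ∩ Metric.sphere c₃ r₃ = {p, q})
    (hno3 : ∀ x : E2, ¬ (x ∈ Metric.sphere c₁ r₁ ∧ x ∈ Metric.sphere c₂ r₂ ∧
      x ∈ Metric.sphere c₃ r₃)) :
    ((SepInt c₃ r₃ c₁ r₁ c₂ r₂ ∨ SepInt c₂ r₂ c₁ r₁ c₃ r₃ ∨ SepInt c₁ r₁ c₂ r₂ c₃ r₃) →
      (SepInt c₃ r₃ c₁ r₁ c₂ r₂ ∧ SepInt c₂ r₂ c₁ r₁ c₃ r₃ ∧ SepInt c₁ r₁ c₂ r₂ c₃ r₃)) ∧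
    ((SepInt c₃ r₃ c₁ r₁ c₂ r₂ ∧ SepInt c₂ r₂ c₁ r₁ c₃ r₃ ∧ SepInt c₁ r₁ c₂ r₂ c₃ r₃) ∨
      (NonSepInt c₃ r₃ c₁ r₁ c₂ r₂ ∧ NonSepInt c₂ r₂ c₁ r₁ c₃ r₃ ∧
        NonSepInt c₁ r₁ c₂ r₂ c₃ r₃)) := by
  obtain ⟨p₁₂, q₁₂, hpq₁₂, h₁₂⟩ := h12
  obtain ⟨p₁₃, q₁₃, hpq₁₃, h₁₃⟩ := h13
  obtain ⟨p₂₃, q₂₃, hpq₂₃, h₂₃⟩ := h23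
  have hno₃ : ∀ x ∈ Metric.sphere c₁ r₁ ∩ Metric.sphere c₂ r₂, x ∉ Metric.sphere c₃ r₃ :=
    fun x hx h => hno3 x ⟨hx.1, hx.2, h⟩
  have hno₂ : ∀ x ∈ Metric.sphere c₁ r₁ ∩ Metric.sphere c₃ r₃, x ∉ Metric.sphere c₂ r₂ :=
    fun x hx h => hno3 x ⟨hx.1, h, hx.2⟩
  have hno₁ : ∀ x ∈ Metric.sphere c₂ r₂ ∩ Metric.sphere c₃ r₃, x ∉ Metric.sphere c₁ r₁ :=
    fun x hx h => hno3 x ⟨h, hx.1, hx.2⟩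
  have ne₁₂ : (Metric.sphere c₁ r₁ ∩ Metric.sphere c₂ r₂).Nonempty := h₁₂ ▸ Set.insert_nonempty _ _
  have ne₁₃ : (Metric.sphere c₁ r₁ ∩ Metric.sphere c₃ r₃).Nonempty := h₁₃ ▸ Set.insert_nonempty _ _
  have sep₃ := separates_iff_exists_power_eq hr₃.le hno₃ ne₁₃
  have sep₂ := separates_iff_exists_power_eq hr₂.le hno₂ ne₁₂
  have sep₁ := separates_iff_exists_power_eq hr₁.le hno₁ (Set.inter_comm _ _ ▸ ne₁₂)
  -- the three conditions differ only in the order of the conjuncts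
  simp only [and_comm, and_left_comm] at sep₃ sep₂ sep₁
  have e₃ := sepInt_iff_and_nonSepInt_iff hpq₁₂ h₁₂ sep₃
  have e₂ := sepInt_iff_and_nonSepInt_iff hpq₁₃ h₁₃ sep₂
  have e₁ := sepInt_iff_and_nonSepInt_iff hpq₂₃ h₂₃ sep₁
  rw [e₃.1, e₂.1, e₁.1, e₃.2, e₂.2, e₁.2]
  simp only [or_self, and_self, imp_self, true_and]
  exact em _
end
end

section
/- Let {C1, C2, C3} be an arrangement of three circles. Then C3 separates the two intersection points of C1 and C2 if and only if the two intersection points of C1 and C2 lie in different connected components of C1 \ (C1 ∩ C3). -/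
/-!
On a circle `sphere c r`, the squared distance to a point `c'` is an affine function of
`⟪z - c, c' - c⟫`, so the part of the circle inside the disk of `C₃`, and the part outside its
closed disk, are each cut out of the circle by an open half-plane. Such a set is an arc (the angle
`θ` with `cos θ > k` ranges over an interval of `[-π, π]`), hence preconnected. These two arcs are
disjoint, relatively open and cover `C₁ \ C₃`, so two points of `C₁ \ C₃` lie in the same
connected component exactly when they lie on the same side of `C₃`.
-/

noncomputable section

open Metric Set Real ComplexConjugate
open scoped InnerProductSpace

theorem connectedComponentIn_eq_iff_of_isPreconnected_inter {X : Type*} [TopologicalSpace X]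
    {S U V : Set X} (hU : IsOpen U) (hV : IsOpen V) (hUV : Disjoint U V) (hS : S ⊆ U ∪ V)
    (hSU : IsPreconnected (S ∩ U)) (hSV : IsPreconnected (S ∩ V)) {x y : X} (hx : x ∈ S)
    (hy : y ∈ S) :
    connectedComponentIn S x = connectedComponentIn S y ↔ (x ∈ U ↔ y ∈ U) := by
  constructor
  · intro h
    have hyx : y ∈ connectedComponentIn S x := h ▸ mem_connectedComponentIn hy
    rcases isPreconnected_connectedComponentIn.subset_or_subset hU hV hUV
      ((connectedComponentIn_subset S x).trans hS) with hsub | hsub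
    · exact iff_of_true (hsub (mem_connectedComponentIn hx)) (hsub hyx)
    · exact iff_of_false (hUV.notMem_of_mem_right (hsub (mem_connectedComponentIn hx)))
        (hUV.notMem_of_mem_right (hsub hyx))
  · intro hxy
    have same_component {T : Set X} (hT : IsPreconnected (S ∩ T)) (hxT : x ∈ T) (hyT : y ∈ T) :
        connectedComponentIn S x = connectedComponentIn S y :=
      connectedComponentIn_eq (hT.subset_connectedComponentIn ⟨hx, hxT⟩ inter_subset_left
        ⟨hy, hyT⟩)
    by_cases hxU : x ∈ U
    · exact same_component hSU hxU (hxy.1 hxU)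
    · exact same_component hSV ((hS hx).resolve_left hxU) ((hS hy).resolve_left (hxy.not.1 hxU))

theorem dist_sq_eq_of_mem_sphere {F : Type*} [NormedAddCommGroup F] [InnerProductSpace ℝ F]
    {c z : F} {r : ℝ} (hz : z ∈ sphere c r) (c' : F) :
    dist z c' ^ 2 = r ^ 2 + ‖c' - c‖ ^ 2 - 2 * ⟪z - c, c' - c⟫_ℝ := by
  rw [mem_sphere, dist_eq_norm] at hz
  rw [dist_eq_norm, ← sub_sub_sub_cancel_right z c' c, norm_sub_sq_real, hz]
  ring

theorem Real.ordConnected_Icc_inter_lt_mul_cos {a : ℝ} (ha : 0 ≤ a) (k : ℝ) :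
    (Icc (-π) π ∩ {θ | k < a * cos θ}).OrdConnected := by
  refine ⟨fun x hx y hy θ hθ => ⟨⟨hx.1.1.trans hθ.1, hθ.2.trans hy.1.2⟩, ?_⟩⟩
  rcases le_total 0 θ with h0 | h0
  · calc k < a * cos y := hy.2
      _ ≤ a * cos θ := by gcongr; exact cos_le_cos_of_nonneg_of_le_pi h0 hy.1.2 hθ.2
  · calc k < a * cos x := hx.2
      _ ≤ a * cos θ := by
        gcongr
        rw [← cos_neg x, ← cos_neg θ]
        exact cos_le_cos_of_nonneg_of_le_pi (neg_nonneg.2 h0) (by linarith [hx.1.1])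
          (by linarith [hθ.1])

theorem Complex.isPreconnected_sphere_inter_lt_inner (c v : ℂ) (r k : ℝ) :
    IsPreconnected (sphere c r ∩ {z | k < ⟪z - c, v⟫_ℝ}) := by
  rcases lt_or_ge r 0 with hr | hr
  · simp [sphere_eq_empty_of_neg hr, isPreconnected_empty]
  set u := exp (arg v * I)
  have hu : ‖u‖ = 1 := norm_exp_ofReal_mul_I _
  set f : ℝ → ℂ := fun θ => c + r * exp (θ * I) * u
  have inner_f (θ : ℝ) : ⟪f θ - c, v⟫_ℝ = r * ‖v‖ * Real.cos θ := by
    have huu : u * conj u = 1 := by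
      rw [mul_conj, normSq_eq_norm_sq, hu]; norm_num
    have hfc : f θ - c = r * exp (θ * I) * u := add_sub_cancel_left _ _
    have hv : v = ‖v‖ * u := (norm_mul_exp_arg_mul_I v).symm
    conv_lhs => rw [hfc, hv, Complex.inner, map_mul, map_mul, conj_ofReal]
    calc _ = (((r * ‖v‖ : ℝ) : ℂ) * conj (exp (θ * I)) * (u * conj u)).re := by
          push_cast; ring_nf
      _ = _ := by rw [huu, mul_one, re_ofReal_mul, conj_re, exp_ofReal_mul_I_re]
  have hf_sphere (θ : ℝ) : f θ ∈ sphere c r := by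
    simp [f, hu, abs_of_nonneg hr]
  have hf_surj (z : ℂ) (hz : z ∈ sphere c r) : f (arg ((z - c) / u)) = z := by
    have hu0 : u ≠ 0 := norm_ne_zero_iff.1 (by rw [hu]; exact one_ne_zero)
    have hzu : ‖(z - c) / u‖ = r := by rw [norm_div, hu, div_one, ← dist_eq_norm]; exact hz
    have := norm_mul_exp_arg_mul_I ((z - c) / u)
    rw [hzu] at this
    simp only [f, this, div_mul_cancel₀ _ hu0, add_sub_cancel]
  have hf_image : sphere c r ∩ {z | k < ⟪z - c, v⟫_ℝ} =
      f '' (Icc (-π) π ∩ {θ | k < r * ‖v‖ * Real.cos θ}) := by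
    ext z
    constructor
    · rintro ⟨hz, hk⟩
      refine ⟨_, ⟨Ioc_subset_Icc_self (arg_mem_Ioc _), ?_⟩, hf_surj z hz⟩
      rwa [mem_ofPred_eq, ← inner_f, hf_surj z hz]
    · rintro ⟨θ, ⟨-, hθ⟩, rfl⟩
      exact ⟨hf_sphere θ, by rwa [mem_ofPred_eq, inner_f]⟩
  rw [hf_image]
  exact (Real.ordConnected_Icc_inter_lt_mul_cos (by positivity) k).isPreconnected.image f
    (by fun_prop)

theorem EuclideanSpace.isPreconnected_sphere_inter_lt_inner (c v : E2) (r k : ℝ) :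
    IsPreconnected (sphere c r ∩ {z | k < ⟪z - c, v⟫_ℝ}) := by
  let e := Complex.orthonormalBasisOneI.repr
  have h := (Complex.isPreconnected_sphere_inter_lt_inner (e.symm c) (e.symm v) r k).image e
    e.continuous.continuousOn
  rw [e.image_eq_preimage_symm] at h
  convert h using 1
  ext z
  simp only [mem_preimage, mem_inter_iff, mem_sphere, mem_ofPred_eq, LinearIsometryEquiv.dist_map,
    ← map_sub, LinearIsometryEquiv.inner_map_map]

theorem EuclideanSpace.isPreconnected_sphere_inter_ball (c c' : E2) (r r' : ℝ) :
    IsPreconnected (sphere c r ∩ ball c' r') := by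
  rcases lt_or_ge r' 0 with hr' | hr'
  · simp [ball_eq_empty.2 hr'.le, isPreconnected_empty]
  convert isPreconnected_sphere_inter_lt_inner c (c' - c) r
    ((r ^ 2 + ‖c' - c‖ ^ 2 - r' ^ 2) / 2) using 1
  ext z
  simp only [mem_inter_iff, mem_ball, mem_ofPred_eq, and_congr_right_iff]
  intro hz
  rw [← sq_lt_sq₀ dist_nonneg hr', dist_sq_eq_of_mem_sphere hz]
  constructor <;> intro <;> linarith

theorem EuclideanSpace.isPreconnected_sphere_diff_closedBall (c c' : E2) (r r' : ℝ) :
    IsPreconnected (sphere c r \ closedBall c' r') := by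
  rcases lt_or_ge r' 0 with hr' | hr'
  · rw [closedBall_eq_empty.2 hr', sdiff_empty]
    refine isPreconnected_sphere ?_ c r
    rw [← Module.finrank_eq_rank, finrank_euclideanSpace_fin]
    norm_num
  convert isPreconnected_sphere_inter_lt_inner c (c - c') r
    ((r' ^ 2 - r ^ 2 - ‖c' - c‖ ^ 2) / 2) using 1
  ext z
  simp only [mem_sdiff, mem_inter_iff, mem_closedBall, not_le, mem_ofPred_eq, and_congr_right_iff]
  intro hz
  rw [← sq_lt_sq₀ hr' dist_nonneg, dist_sq_eq_of_mem_sphere hz, ← neg_sub c' c, inner_neg_right]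
  constructor <;> intro <;> linarith

theorem stmt2_general (c₁ c₂ c₃ : E2) (r₁ r₂ r₃ : ℝ)
    (hno3 : ∀ x : E2, ¬ (x ∈ Metric.sphere c₁ r₁ ∧ x ∈ Metric.sphere c₂ r₂ ∧
      x ∈ Metric.sphere c₃ r₃)) :
    ∀ p q : E2, p ≠ q → Metric.sphere c₁ r₁ ∩ Metric.sphere c₂ r₂ = {p, q} →
      (Xor' (p ∈ Metric.ball c₃ r₃) (q ∈ Metric.ball c₃ r₃) ↔
        connectedComponentIn (Metric.sphere c₁ r₁ \ (Metric.sphere c₁ r₁ ∩ Metric.sphere c₃ r₃)) p ≠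
        connectedComponentIn (Metric.sphere c₁ r₁ \ (Metric.sphere c₁ r₁ ∩ Metric.sphere c₃ r₃)) q) := by
  intro p q _ hpq
  have mem_S (x : E2) (hx : x ∈ sphere c₁ r₁ ∩ sphere c₂ r₂) :
      x ∈ sphere c₁ r₁ \ sphere c₃ r₃ :=
    ⟨hx.1, fun h => hno3 x ⟨hx.1, hx.2, h⟩⟩
  have hS_sub : sphere c₁ r₁ \ sphere c₃ r₃ ⊆ ball c₃ r₃ ∪ (closedBall c₃ r₃)ᶜ := by
    rintro z ⟨-, hz⟩
    simp only [mem_union, mem_ball, mem_compl_iff, mem_closedBall, not_le]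
    exact lt_or_gt_of_ne hz
  have hS_ball : (sphere c₁ r₁ \ sphere c₃ r₃) ∩ ball c₃ r₃ = sphere c₁ r₁ ∩ ball c₃ r₃ := by
    ext z; simp only [mem_inter_iff, mem_sdiff, mem_sphere, mem_ball]; grind
  have hS_out : (sphere c₁ r₁ \ sphere c₃ r₃) ∩ (closedBall c₃ r₃)ᶜ =
      sphere c₁ r₁ \ closedBall c₃ r₃ := by
    ext z; simp only [mem_inter_iff, mem_sdiff, mem_compl_iff, mem_sphere, mem_closedBall]; grind
  rw [sdiff_self_inter, Xor', xor_iff_not_iff, Ne, not_iff_not,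
    connectedComponentIn_eq_iff_of_isPreconnected_inter isOpen_ball isClosed_closedBall.isOpen_compl
      (disjoint_compl_right.mono_left ball_subset_closedBall) hS_sub
      (hS_ball ▸ EuclideanSpace.isPreconnected_sphere_inter_ball c₁ c₃ r₁ r₃)
      (hS_out ▸ EuclideanSpace.isPreconnected_sphere_diff_closedBall c₁ c₃ r₁ r₃)
      (mem_S p (hpq ▸ mem_insert p {q})) (mem_S q (hpq ▸ mem_insert_of_mem p rfl))]

/-- Let `{C₁, C₂, C₃}` be an arrangement of three circles.  Then `C₃` separates the two
intersection points of `C₁` and `C₂` if and only if these two intersection points lie in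
different connected components of `C₁ \ (C₁ ∩ C₃)`. -/
theorem stmt2 (c₁ c₂ c₃ : E2) (r₁ r₂ r₃ : ℝ)
    (hr₁ : 0 < r₁) (hr₂ : 0 < r₂) (hr₃ : 0 < r₃)
    (h12 : ∃ p q : E2, p ≠ q ∧ Metric.sphere c₁ r₁ ∩ Metric.sphere c₂ r₂ = {p, q})
    (h13 : ∃ p q : E2, p ≠ q ∧ Metric.sphere c₁ r₁ ∩ Metric.sphere c₃ r₃ = {p, q})
    (h23 : ∃ p q : E2, p ≠ q ∧ Metric.sphere c₂ r₂ ∩ Metric.sphere c₃ r₃ = {p, q})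
    (hno3 : ∀ x : E2, ¬ (x ∈ Metric.sphere c₁ r₁ ∧ x ∈ Metric.sphere c₂ r₂ ∧
      x ∈ Metric.sphere c₃ r₃)) :
    ∀ p q : E2, p ≠ q → Metric.sphere c₁ r₁ ∩ Metric.sphere c₂ r₂ = {p, q} →
      (Xor' (p ∈ Metric.ball c₃ r₃) (q ∈ Metric.ball c₃ r₃) ↔
        connectedComponentIn (Metric.sphere c₁ r₁ \ (Metric.sphere c₁ r₁ ∩ Metric.sphere c₃ r₃)) p ≠
        connectedComponentIn (Metric.sphere c₁ r₁ \ (Metric.sphere c₁ r₁ ∩ Metric.sphere c₃ r₃)) q) :=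
  stmt2_general c₁ c₂ c₃ r₁ r₂ r₃ hno3
end
end

section
/- For an integer m ≥ 3 and each k ∈ {1, …, m}, let P_k be the plane {(x, y, z) ∈ ℝ³ : y = 2kx − k²z} through the origin and let G_k = S² ∩ P_k, where S² is the unit sphere in ℝ³. Then: (a) for all j ≠ k, the set G_j ∩ G_k consists of exactly two points, which are antipodal; (b) no point of S² lies on three of the circles G_1, …, G_m; and (c) for all distinct i, j, k, the two points of G_i ∩ G_j lie strictly on opposite sides of the plane P_k (the linear form y − 2kx + k²z takes values of opposite sign at them). -/
/-!
For fixed `x`, the form `planeForm t x = x₁ - 2t x₀ + t² x₂` defining `P_t` is a quadratic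
polynomial in `t`. If `x ∈ P_a ∩ P_b` with `a ≠ b`, it vanishes at `a` and `b`, so it equals
`x₂ (t - a)(t - b)`; moreover `x₂` determines `x` on that line, so `x₂ ≠ 0` for `x ≠ 0`.
Hence a third plane `P_c` contains no nonzero point of `P_a ∩ P_b`, and since the form is
odd in `x`, it takes opposite signs at the two antipodal points of `G_a ∩ G_b`.
-/

noncomputable section

/-- Euclidean 3-space. -/
abbrev E3 := EuclideanSpace ℝ (Fin 3)

/-- The plane `{(x, y, z) : y = 2kx − k²z}` through the origin. -/
def Pplane (k : ℕ) : Set E3 :=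
  {v : E3 | v 1 = 2 * (k : ℝ) * v 0 - (k : ℝ) ^ 2 * v 2}

/-- The great circle `G_k = S² ∩ P_k`. -/
def G (k : ℕ) : Set E3 :=
  Metric.sphere (0 : E3) 1 ∩ Pplane k

def planeForm (t : ℝ) (v : E3) : ℝ := v 1 - 2 * t * v 0 + t ^ 2 * v 2

def planeInterDir (a b : ℝ) : E3 := !₂[a + b, 2 * a * b, 2]

def planeInterPoint (a b : ℝ) : E3 := ‖planeInterDir a b‖⁻¹ • planeInterDir a b

lemma planeForm_smul (t c : ℝ) (v : E3) : planeForm t (c • v) = c * planeForm t v := by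
  simp only [planeForm, PiLp.smul_apply, smul_eq_mul]
  ring

lemma planeForm_neg (t : ℝ) (v : E3) : planeForm t (-v) = -planeForm t v := by
  simp only [planeForm, PiLp.neg_apply]
  ring

lemma planeForm_planeInterDir (t a b : ℝ) :
    planeForm t (planeInterDir a b) = 2 * ((t - a) * (t - b)) := by
  simp [planeForm, planeInterDir]
  ring

lemma mem_Pplane_iff {k : ℕ} {v : E3} : v ∈ Pplane k ↔ planeForm k v = 0 := by
  simp only [Pplane, planeForm, Set.mem_ofPred_eq]
  constructor <;> intro h <;> linarith

lemma mem_G_iff {k : ℕ} {v : E3} : v ∈ G k ↔ ‖v‖ = 1 ∧ planeForm k v = 0 := by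
  rw [G, Set.mem_inter_iff, mem_sphere_zero_iff_norm, mem_Pplane_iff]

lemma eq_inv_norm_smul_or_eq_neg_of_norm_eq_one {V : Type*} [NormedAddCommGroup V]
    [NormedSpace ℝ V] {x w : V} {c : ℝ} (hx : ‖x‖ = 1) (hxw : x = c • w) :
    x = ‖w‖⁻¹ • w ∨ x = -(‖w‖⁻¹ • w) := by
  have habs : |c| = ‖w‖⁻¹ :=
    eq_inv_of_mul_eq_one_left (by rw [← Real.norm_eq_abs, ← norm_smul, ← hxw, hx])
  rcases (abs_eq (inv_nonneg.mpr (norm_nonneg w))).mp habs with h | h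
  · exact .inl (by rw [hxw, h])
  · exact .inr (by rw [hxw, h, neg_smul])

section PlaneInter

variable {a b : ℝ} {x : E3}

lemma eq_smul_planeInterDir (hab : a ≠ b) (ha : planeForm a x = 0) (hb : planeForm b x = 0) :
    x = (x 2 / 2) • planeInterDir a b := by
  have hd : 2 * (a - b) ≠ 0 := mul_ne_zero two_ne_zero (sub_ne_zero.mpr hab)
  have h0 : x 0 = (a + b) * x 2 / 2 :=
    mul_left_cancel₀ hd (by unfold planeForm at ha hb; linear_combination hb - ha)
  have h1 : x 1 = a * b * x 2 := by
    unfold planeForm at ha; linear_combination ha + 2 * a * h0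
  ext i
  fin_cases i <;> simp [planeInterDir, h0, h1] <;> ring

lemma coord_two_ne_zero (hab : a ≠ b) (ha : planeForm a x = 0) (hb : planeForm b x = 0)
    (hx : x ≠ 0) : x 2 ≠ 0 := by
  intro h2
  apply hx
  rw [eq_smul_planeInterDir hab ha hb, h2, zero_div, zero_smul]

lemma planeForm_eq_mul_of_planeForm_eq_zero (hab : a ≠ b) (ha : planeForm a x = 0)
    (hb : planeForm b x = 0) (t : ℝ) : planeForm t x = x 2 * ((t - a) * (t - b)) := by
  rw [eq_smul_planeInterDir hab ha hb, planeForm_smul, planeForm_planeInterDir]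
  simp [planeInterDir]
  ring

lemma planeForm_ne_zero_of_planeForm_eq_zero {c : ℝ} (hab : a ≠ b) (ha : planeForm a x = 0)
    (hb : planeForm b x = 0) (hx : x ≠ 0) (hca : c ≠ a) (hcb : c ≠ b) : planeForm c x ≠ 0 := by
  rw [planeForm_eq_mul_of_planeForm_eq_zero hab ha hb]
  exact mul_ne_zero (coord_two_ne_zero hab ha hb hx)
    (mul_ne_zero (sub_ne_zero.mpr hca) (sub_ne_zero.mpr hcb))

end PlaneInter

lemma planeInterDir_ne_zero (a b : ℝ) : planeInterDir a b ≠ 0 := fun h => by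
  simpa [planeInterDir] using congrArg (· 2) h

lemma norm_planeInterPoint (a b : ℝ) : ‖planeInterPoint a b‖ = 1 :=
  norm_smul_inv_norm (planeInterDir_ne_zero a b)

lemma planeInterPoint_ne_neg (a b : ℝ) : planeInterPoint a b ≠ -planeInterPoint a b := by
  have : IsAddTorsionFree E3 := .of_isTorsionFree ℝ E3
  rw [Ne, self_eq_neg, ← norm_eq_zero, norm_planeInterPoint]
  exact one_ne_zero

lemma G_inter_G {j k : ℕ} (hjk : j ≠ k) :
    G j ∩ G k = {planeInterPoint j k, -planeInterPoint j k} := by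
  ext x
  simp only [Set.mem_inter_iff, mem_G_iff, Set.mem_insert_iff, Set.mem_singleton_iff]
  constructor
  · rintro ⟨⟨hx, hj⟩, -, hk⟩
    exact eq_inv_norm_smul_or_eq_neg_of_norm_eq_one hx
      (eq_smul_planeInterDir (Nat.cast_injective.ne hjk) hj hk)
  · have hform (t : ℝ) : planeForm t (planeInterPoint j k) = 0 ↔ t = j ∨ t = k := by
      simp [planeInterPoint, planeForm_smul, planeForm_planeInterDir, planeInterDir_ne_zero,
        sub_eq_zero]
    rintro (rfl | rfl) <;> simp [norm_planeInterPoint, planeForm_neg, hform]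

lemma planeForm_ne_zero_of_mem_G_inter_G {i j k : ℕ} (hij : i ≠ j) (hik : i ≠ k) (hjk : j ≠ k)
    {x : E3} (hx : x ∈ G i ∩ G j) : planeForm k x ≠ 0 := by
  obtain ⟨⟨hnorm, hi⟩, -, hj⟩ := And.imp mem_G_iff.mp mem_G_iff.mp hx
  exact planeForm_ne_zero_of_planeForm_eq_zero (Nat.cast_injective.ne hij) hi hj
    (norm_ne_zero_iff.mp (hnorm ▸ one_ne_zero)) (Nat.cast_injective.ne hik.symm)
    (Nat.cast_injective.ne hjk.symm)

theorem stmt4_general (m : ℕ) :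
    (∀ j k : ℕ, 1 ≤ j → j ≤ m → 1 ≤ k → k ≤ m → j ≠ k →
      ∃ p : E3, p ≠ -p ∧ G j ∩ G k = {p, -p}) ∧
    (∀ i j k : ℕ, 1 ≤ i → i ≤ m → 1 ≤ j → j ≤ m → 1 ≤ k → k ≤ m →
      i ≠ j → i ≠ k → j ≠ k →
      ∀ x : E3, ¬ (x ∈ G i ∧ x ∈ G j ∧ x ∈ G k)) ∧
    (∀ i j k : ℕ, 1 ≤ i → i ≤ m → 1 ≤ j → j ≤ m → 1 ≤ k → k ≤ m →
      i ≠ j → i ≠ k → j ≠ k →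
      ∀ p q : E3, p ≠ q → G i ∩ G j = {p, q} →
        (p 1 - 2 * (k : ℝ) * p 0 + (k : ℝ) ^ 2 * p 2) *
          (q 1 - 2 * (k : ℝ) * q 0 + (k : ℝ) ^ 2 * q 2) < 0) := by
  refine ⟨fun j k _ _ _ _ hjk => ⟨_, planeInterPoint_ne_neg j k, G_inter_G hjk⟩, ?_, ?_⟩
  · rintro i j k - - - - - - hij hik hjk x ⟨hi, hj, hk⟩
    exact planeForm_ne_zero_of_mem_G_inter_G hij hik hjk ⟨hi, hj⟩ (mem_G_iff.mp hk).2
  · rintro i j k - - - - - - hij hik hjk p q - hpq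
    have hq : q = -p := by
      rcases Set.pair_eq_pair_iff.mp ((G_inter_G hij).symm.trans hpq) with
        ⟨rfl, rfl⟩ | ⟨rfl, rfl⟩ <;> simp
    have hp : p ∈ G i ∩ G j := hpq ▸ Set.mem_insert p {q}
    change planeForm k p * planeForm k q < 0
    rw [hq, planeForm_neg, mul_neg, neg_lt_zero]
    exact mul_self_pos.mpr (planeForm_ne_zero_of_mem_G_inter_G hij hik hjk hp)

/-- For `m ≥ 3` and `k ∈ {1, …, m}`, the great circles `G_k = S² ∩ P_k` with
`P_k = {y = 2kx − k²z}` satisfy: (a) any two of them meet in exactly two points, which are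
antipodal; (b) no point of `S²` lies on three of them; (c) for distinct `i, j, k`, the two
points of `G_i ∩ G_j` lie strictly on opposite sides of the plane `P_k`. -/
theorem stmt4 (m : ℕ) (hm : 3 ≤ m) :
    (∀ j k : ℕ, 1 ≤ j → j ≤ m → 1 ≤ k → k ≤ m → j ≠ k →
      ∃ p : E3, p ≠ -p ∧ G j ∩ G k = {p, -p}) ∧
    (∀ i j k : ℕ, 1 ≤ i → i ≤ m → 1 ≤ j → j ≤ m → 1 ≤ k → k ≤ m →
      i ≠ j → i ≠ k → j ≠ k →
      ∀ x : E3, ¬ (x ∈ G i ∧ x ∈ G j ∧ x ∈ G k)) ∧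
    (∀ i j k : ℕ, 1 ≤ i → i ≤ m → 1 ≤ j → j ≤ m → 1 ≤ k → k ≤ m →
      i ≠ j → i ≠ k → j ≠ k →
      ∀ p q : E3, p ≠ q → G i ∩ G j = {p, q} →
        (p 1 - 2 * (k : ℝ) * p 0 + (k : ℝ) ^ 2 * p 2) *
          (q 1 - 2 * (k : ℝ) * q 0 + (k : ℝ) ^ 2 * q 2) < 0) :=
  stmt4_general m
end
end

section
/- For every integer m ≥ 1 there exists an integer N such that for every family of N lines in ℝ² that are pairwise non-parallel and such that no three of them pass through a common point, there exist m lines ℓ_1, …, ℓ_m of the family and, for each i, an injective affine parametrization γ_i : ℝ → ℝ² with image ℓ_i, such that for all j < k with j, k ≠ i, the parameter of the point ℓ_i ∩ ℓ_j is smaller than the parameter of the point ℓ_i ∩ ℓ_k. -/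
/-!
Apart from at most one vertical line, the lines are graphs `y = s x + β s`, indexed by their
pairwise distinct slopes `s`, and lines `s` and `t` cross at abscissa `-slope β s t`. Dually, no
three concurrent lines means no three collinear points among `(s, β s)`. By the Erdős–Szekeres
cup–cap theorem, `m` of these points form a cup or a cap of `β`. Along a cup, `t ↦ slope β s t` is
increasing for each fixed `s`, so the crossings on line `s` come in the order of the slopes;
along a cap they come in the reverse order.
-/

noncomputable section

/-- A line in the plane: the image of an injective affine parametrization. -/
def IsLine (L : Set E2) : Prop :=
  ∃ p v : E2, v ≠ 0 ∧ L = {x : E2 | ∃ t : ℝ, x = p + t • v}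

open Finset Function

section Slope

variable {f : ℝ → ℝ} {a b c : ℝ}

lemma sub_mul_slope_add_sub_mul_slope (f : ℝ → ℝ) (a b c : ℝ) :
    (b - a) * slope f a b + (c - b) * slope f b c = (c - a) * slope f a c := by
  simp only [← smul_eq_mul, sub_smul_slope, vsub_eq_sub]
  ring

lemma slope_lt_slope_outer_of_slope_lt (hab : a < b) (hbc : b < c)
    (h : slope f a b < slope f b c) : slope f a b < slope f a c := by
  have := sub_mul_slope_add_sub_mul_slope f a b c
  nlinarith

lemma slope_outer_lt_slope_of_slope_lt (hab : a < b) (hbc : b < c)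
    (h : slope f a b < slope f b c) : slope f a c < slope f b c := by
  have := sub_mul_slope_add_sub_mul_slope f a b c
  nlinarith

lemma slope_smul_fun (c : ℝ) (f : ℝ → ℝ) (a b : ℝ) : slope (c • f) a b = c * slope f a b := by
  simp only [slope_def_field, Pi.smul_apply, smul_eq_mul]
  ring

end Slope

def IsCup (f : ℝ → ℝ) (C : Set ℝ) : Prop :=
  ∀ a ∈ C, ∀ b ∈ C, ∀ c ∈ C, a < b → b < c → slope f a b < slope f b c

def NoThreeCollinear (f : ℝ → ℝ) (S : Set ℝ) : Prop :=
  ∀ a ∈ S, ∀ b ∈ S, ∀ c ∈ S, a < b → b < c → slope f a b ≠ slope f b c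

namespace IsCup

variable {f : ℝ → ℝ} {C : Set ℝ}

lemma of_encard_le_two (hC : C.encard ≤ 2) : IsCup f C := by
  intro a ha b hb c hc hab hbc
  have : ({a, b, c} : Set ℝ).encard ≤ 2 :=
    (Set.encard_le_encard (by grind)).trans hC
  rw [Set.encard_insert_of_notMem (by grind), Set.encard_pair hbc.ne] at this
  norm_num at this

lemma strictMonoOn_slope (hC : IsCup f C) {s : ℝ} (hs : s ∈ C) :
    StrictMonoOn (slope f s) (C \ {s}) := by
  rintro t ⟨ht, hts⟩ u ⟨hu, hus⟩ htu
  rcases lt_or_gt_of_ne (hts : t ≠ s) with hts | hst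
  · rcases lt_or_gt_of_ne (hus : u ≠ s) with hus | hsu
    · rw [slope_comm f s t, slope_comm f s u]
      exact slope_outer_lt_slope_of_slope_lt htu hus (hC t ht u hu s hs htu hus)
    · rw [slope_comm f s t]
      exact hC t ht s hs u hu hts hsu
  · exact slope_lt_slope_outer_of_slope_lt hst htu (hC s hs t ht u hu hst htu)

lemma insert_of_max (hC : IsCup f C) {q x : ℝ} (hq : q ∈ C) (hmax : ∀ c ∈ C, c ≤ q)
    (hqx : q < x) (hx : ∀ c ∈ C, c < q → slope f c q < slope f q x) :
    IsCup f (insert x C) := by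
  have mem : ∀ y ∈ insert x C, y < x → y ∈ C := fun y hy hyx =>
    hy.resolve_left hyx.ne
  intro a ha b hb c hc hab hbc
  rcases hc with rfl | hc
  · have hb' := mem b hb hbc
    have ha' := mem a ha (hab.trans hbc)
    rcases (hmax b hb').lt_or_eq with hbq | rfl
    · exact (hC a ha' b hb' q hq hab hbq).trans
        (slope_lt_slope_outer_of_slope_lt hbq hqx (hx b hb' hbq))
    · exact hx a ha' hab
  · have hcx := (hmax c hc).trans_lt hqx
    exact hC a (mem a ha (hab.trans hbc |>.trans hcx)) b (mem b hb (hbc.trans hcx)) c hc hab hbc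

lemma insert_of_min (hC : IsCup f C) {q x : ℝ} (hq : q ∈ C) (hmin : ∀ c ∈ C, q ≤ c)
    (hxq : x < q) (hx : ∀ c ∈ C, q < c → slope f x q < slope f q c) :
    IsCup f (insert x C) := by
  have mem : ∀ y ∈ insert x C, x < y → y ∈ C := fun y hy hxy =>
    hy.resolve_left hxy.ne'
  intro a ha b hb c hc hab hbc
  rcases ha with rfl | ha
  · have hb' := mem b hb hab
    have hc' := mem c hc (hab.trans hbc)
    rcases (hmin b hb').lt_or_eq with hqb | rfl
    · exact (slope_outer_lt_slope_of_slope_lt hxq hqb (hx b hb' hqb)).trans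
        (hC q hq b hb' c hc' hqb hbc)
    · exact hx c hc' hbc
  · have hxa := hxq.trans_le (hmin a ha)
    exact hC a ha b (mem b hb (hxa.trans hab)) c (mem c hc (hxa.trans hab |>.trans hbc)) hab hbc

end IsCup

def graphLine (a b : ℝ) : Set E2 := {z | z 1 = a * z 0 + b}

lemma IsLine.eq_graphLine_or_vertical {L : Set E2} (hL : IsLine L) :
    (∃ a b, L = graphLine a b) ∨ ∃ c, L = {z : E2 | z 0 = c} := by
  obtain ⟨p, v, hv, rfl⟩ := hL
  by_cases hv0 : v 0 = 0
  · right
    have hv1 : v 1 ≠ 0 := fun hv1 => hv (by ext i; fin_cases i <;> simp [hv0, hv1])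
    refine ⟨p 0, Set.ext fun z => ⟨?_, fun hz => ⟨(z 1 - p 1) / v 1, ?_⟩⟩⟩
    · rintro ⟨t, rfl⟩
      simp [hv0]
    · ext i
      fin_cases i
      · simpa [hv0] using hz
      · simp only [Fin.mk_one, PiLp.add_apply, PiLp.smul_apply, smul_eq_mul]
        field_simp
        ring
  · left
    refine ⟨v 1 / v 0, p 1 - v 1 / v 0 * p 0,
      Set.ext fun z => ⟨?_, fun hz => ⟨(z 0 - p 0) / v 0, ?_⟩⟩⟩
    · rintro ⟨t, rfl⟩
      simp only [graphLine, Set.mem_ofPred_eq, PiLp.add_apply, PiLp.smul_apply, smul_eq_mul]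
      field_simp
      ring
    · simp only [graphLine, Set.mem_ofPred_eq] at hz
      ext i
      fin_cases i
      · simp only [Fin.zero_eta, PiLp.add_apply, PiLp.smul_apply, smul_eq_mul]
        field_simp
        ring
      · simp only [Fin.mk_one, hz, PiLp.add_apply, PiLp.smul_apply, smul_eq_mul]
        field_simp
        ring

lemma not_existsUnique_mem_inter_of_add_mem {G : Type*} [AddGroup G] {L L' : Set G} {w : G}
    (hw : w ≠ 0) (hL : ∀ z ∈ L, z + w ∈ L) (hL' : ∀ z ∈ L', z + w ∈ L') :
    ¬ ∃! z, z ∈ L ∩ L' := by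
  rintro ⟨z, hz, huniq⟩
  exact hw (add_eq_left.1 (huniq _ ⟨hL z hz.1, hL' z hz.2⟩))

lemma ne_of_existsUnique_mem_graphLine_inter {a a' b b' : ℝ}
    (h : ∃! z, z ∈ graphLine a b ∩ graphLine a' b') : a ≠ a' := by
  rintro rfl
  have hw : (!₂[1, a] : E2) ≠ 0 := fun hw => by simpa using congrArg (· 0) hw
  refine not_existsUnique_mem_inter_of_add_mem hw ?_ ?_ h <;>
  · intro z hz
    simp only [graphLine, Set.mem_ofPred_eq] at hz ⊢
    simp only [PiLp.add_apply, hz, Matrix.cons_val_one, Matrix.cons_val_fin_one,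
      Matrix.cons_val_zero]
    ring

lemma not_existsUnique_mem_vertical_inter (c c' : ℝ) :
    ¬ ∃! z, z ∈ {z : E2 | z 0 = c} ∩ {z : E2 | z 0 = c'} := by
  have hw : (!₂[0, 1] : E2) ≠ 0 := fun hw => by simpa using congrArg (· 1) hw
  exact not_existsUnique_mem_inter_of_add_mem hw (by simp) (by simp)

lemma eq_neg_slope_of_mem_graphLine {f : ℝ → ℝ} {s t : ℝ} {z : E2} (hst : s ≠ t)
    (hs : z ∈ graphLine s (f s)) (ht : z ∈ graphLine t (f t)) : z 0 = -slope f s t := by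
  simp only [graphLine, Set.mem_ofPred_eq] at hs ht
  rw [slope_def_field, eq_neg_iff_add_eq_zero]
  field_simp [sub_ne_zero.2 hst.symm]
  linarith

lemma exists_mem_graphLine_of_slope_eq {f : ℝ → ℝ} {s t u : ℝ} (hst : s ≠ t) (htu : t ≠ u)
    (h : slope f s t = slope f t u) :
    ∃ z : E2, z ∈ graphLine s (f s) ∧ z ∈ graphLine t (f t) ∧ z ∈ graphLine u (f u) := by
  refine ⟨!₂[-slope f s t, t * -slope f s t + f t], ?_, by simp [graphLine], ?_⟩
  · simp only [graphLine, slope_def_field, mul_neg, Set.mem_ofPred_eq, Matrix.cons_val_one,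
      Matrix.cons_val_fin_one, Matrix.cons_val_zero]
    field_simp [sub_ne_zero.2 hst.symm]
    ring
  · rw [h]
    simp only [graphLine, slope_def_field, mul_neg, Set.mem_ofPred_eq, Matrix.cons_val_one,
      Matrix.cons_val_fin_one, Matrix.cons_val_zero]
    field_simp [sub_ne_zero.2 htu.symm]
    ring

def graphParam (a b c τ : ℝ) : E2 := !₂[0, b] + τ • !₂[c, c * a]

section graphParam

variable {a b c : ℝ}

@[simp] lemma graphParam_apply_zero (τ : ℝ) : graphParam a b c τ 0 = τ * c := by
  simp [graphParam]

lemma graphParam_mem (τ : ℝ) : graphParam a b c τ ∈ graphLine a b := by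
  simp only [graphLine, graphParam, Set.mem_ofPred_eq, PiLp.add_apply, Matrix.cons_val_one,
    Matrix.cons_val_fin_one, PiLp.smul_apply, smul_eq_mul, Matrix.cons_val_zero, zero_add]
  ring

lemma graphParam_injective (hc : c ≠ 0) : Injective (graphParam a b c) := fun s t h => by
  simpa [hc] using congrArg (· 0) h

lemma range_graphParam (hc : c ≠ 0) : Set.range (graphParam a b c) = graphLine a b := by
  refine Set.Subset.antisymm (Set.range_subset_iff.2 graphParam_mem) fun z hz => ⟨z 0 / c, ?_⟩
  simp only [graphLine, Set.mem_ofPred_eq] at hz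
  ext i
  fin_cases i
  · simp [hc]
  · simp only [graphParam, Fin.mk_one, PiLp.add_apply, Matrix.cons_val_one, Matrix.cons_val_fin_one,
      PiLp.smul_apply, smul_eq_mul, hz]
    field_simp
    ring

end graphParam

-- Caps of `f` are encoded as cups of `-f`.
def HasCupOrCap (f : ℝ → ℝ) (S : Finset ℝ) (k l : ℕ) : Prop :=
  (∃ C ⊆ S, #C = k ∧ IsCup f C) ∨ ∃ D ⊆ S, #D = l ∧ IsCup (-f) D

section CupCap

variable {f : ℝ → ℝ} {S : Finset ℝ} {k l : ℕ}

lemma NoThreeCollinear.mono {T : Set ℝ} {S : Set ℝ} (h : NoThreeCollinear f S) (hTS : T ⊆ S) :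
    NoThreeCollinear f T :=
  fun a ha b hb c hc => h a (hTS ha) b (hTS hb) c (hTS hc)

lemma hasCupOrCap_of_le_two_left (hk : k ≤ 2) (hS : k ≤ #S) : HasCupOrCap f S k l := by
  obtain ⟨C, hCS, hC⟩ := exists_subset_card_eq hS
  exact Or.inl ⟨C, hCS, hC, IsCup.of_encard_le_two (by simpa [hC] using hk)⟩

lemma hasCupOrCap_of_le_two_right (hl : l ≤ 2) (hS : l ≤ #S) : HasCupOrCap f S k l := by
  obtain ⟨D, hDS, hD⟩ := exists_subset_card_eq hS
  exact Or.inr ⟨D, hDS, hD, IsCup.of_encard_le_two (by simpa [hD] using hl)⟩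

lemma hasCupOrCap_of_cup_of_cap (hgp : NoThreeCollinear f S) {C D : Finset ℝ} {q : ℝ}
    (hCS : C ⊆ S) (hDS : D ⊆ S) (hC : IsCup f C) (hD : IsCup (-f) D)
    (hqC : q ∈ C) (hqD : q ∈ D) (hmax : ∀ c ∈ C, c ≤ q) (hmin : ∀ d ∈ D, q ≤ d)
    (h1C : 1 < #C) (h1D : 1 < #D) : HasCupOrCap f S (#C + 1) (#D + 1) := by
  -- Compare the largest slope into `q` from the cup with the largest slope out of `q` into the
  -- cap: either the cup can be extended past `q`, or the cap before `q`.
  obtain ⟨c, hcC, hcq⟩ := exists_mem_ne h1C q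
  obtain ⟨c₀, hc₀, hc₀max⟩ := (C.filter (· < q)).exists_max_image (slope f · q)
    ⟨c, mem_filter.2 ⟨hcC, (hmax c hcC).lt_of_ne hcq⟩⟩
  obtain ⟨d, hdD, hdq⟩ := exists_mem_ne h1D q
  obtain ⟨d₀, hd₀, hd₀max⟩ := (D.filter (q < ·)).exists_max_image (slope f q)
    ⟨d, mem_filter.2 ⟨hdD, (hmin d hdD).lt_of_ne hdq.symm⟩⟩
  rw [mem_filter] at hc₀ hd₀
  rcases (hgp c₀ (hCS hc₀.1) q (hCS hqC) d₀ (hDS hd₀.1) hc₀.2 hd₀.2).lt_or_gt with h | h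
  · refine Or.inl ⟨insert d₀ C, insert_subset (hDS hd₀.1) hCS,
      card_insert_of_notMem fun hd => (hmax _ hd).not_gt hd₀.2, ?_⟩
    rw [coe_insert]
    exact hC.insert_of_max hqC hmax hd₀.2 fun c hc hcq =>
      (hc₀max c (mem_filter.2 ⟨hc, hcq⟩)).trans_lt h
  · refine Or.inr ⟨insert c₀ D, insert_subset (hCS hc₀.1) hDS,
      card_insert_of_notMem fun hc => (hmin _ hc).not_gt hc₀.2, ?_⟩
    rw [coe_insert]
    refine hD.insert_of_min hqD hmin hc₀.2 fun d hd hqd => ?_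
    simp only [slope_neg_fun, Pi.neg_apply, neg_lt_neg_iff]
    exact (hd₀max d (mem_filter.2 ⟨hd, hqd⟩)).trans_lt h

lemma hasCupOrCap_succ_succ {N₁ N₂ : ℕ} (hk : 2 ≤ k) (hl : 2 ≤ l)
    (h₁ : ∀ S : Finset ℝ, N₁ ≤ #S → NoThreeCollinear f S → HasCupOrCap f S k (l + 1))
    (h₂ : ∀ S : Finset ℝ, N₂ ≤ #S → NoThreeCollinear f S → HasCupOrCap f S (k + 1) l)
    (hS : N₁ + N₂ ≤ #S) (hgp : NoThreeCollinear f S) : HasCupOrCap f S (k + 1) (l + 1) := by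
  classical
  -- Erdős–Szekeres: `E` holds the right endpoints of `k`-cups, so `S \ E` contains no `k`-cup,
  -- and a cap in `E` starts at the right endpoint of a `k`-cup.
  set E := S.filter fun q => ∃ C ⊆ S, #C = k ∧ IsCup f C ∧ q ∈ C ∧ ∀ c ∈ C, c ≤ q
  have hES : E ⊆ S := filter_subset _ S
  by_cases hE : N₁ ≤ #(S \ E)
  · rcases h₁ (S \ E) hE (hgp.mono sdiff_subset) with ⟨C, hCE, hC, hcup⟩ | ⟨D, hDE, hD, hcap⟩
    · have hne : C.Nonempty := card_pos.1 (by omega)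
      have hq := mem_sdiff.1 (hCE (C.max'_mem hne))
      exact absurd (mem_filter.2 ⟨hq.1, C, hCE.trans sdiff_subset, hC, hcup, C.max'_mem hne,
        C.le_max'⟩) hq.2
    · exact Or.inr ⟨D, hDE.trans sdiff_subset, hD, hcap⟩
  · have hEcard : N₂ ≤ #E := by
      have := card_sdiff_add_card_eq_card hES
      omega
    rcases h₂ E hEcard (hgp.mono hES) with ⟨C, hCE, hC, hcup⟩ | ⟨D, hDE, hD, hcap⟩
    · exact Or.inl ⟨C, hCE.trans hES, hC, hcup⟩
    · have hne : D.Nonempty := card_pos.1 (by omega)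
      obtain ⟨C, hCS, hC, hcup, hqC, hmax⟩ := (mem_filter.1 (hDE (D.min'_mem hne))).2
      rw [← hC, ← hD]
      exact hasCupOrCap_of_cup_of_cap hgp hCS (hDE.trans hES) hcup hcap hqC (D.min'_mem hne)
        hmax D.min'_le (by omega) (by omega)

theorem exists_hasCupOrCap (k l : ℕ) :
    ∃ N, ∀ (f : ℝ → ℝ) (S : Finset ℝ), N ≤ #S → NoThreeCollinear f S → HasCupOrCap f S k l := by
  induction k generalizing l with
  | zero => exact ⟨0, fun f S _ _ => hasCupOrCap_of_le_two_left (by norm_num) (Nat.zero_le _)⟩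
  | succ k ihk =>
    induction l with
    | zero => exact ⟨0, fun f S _ _ => hasCupOrCap_of_le_two_right (by norm_num) (Nat.zero_le _)⟩
    | succ l ihl =>
      by_cases hk : k + 1 ≤ 2
      · exact ⟨k + 1, fun f S hS _ => hasCupOrCap_of_le_two_left hk hS⟩
      by_cases hl : l + 1 ≤ 2
      · exact ⟨l + 1, fun f S hS _ => hasCupOrCap_of_le_two_right hl hS⟩
      obtain ⟨N₁, h₁⟩ := ihk (l + 1)
      obtain ⟨N₂, h₂⟩ := ihl
      exact ⟨N₁ + N₂, fun f S hS hgp =>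
        hasCupOrCap_succ_succ (by omega) (by omega) (h₁ f) (h₂ f) hS hgp⟩

end CupCap

lemma exists_cyclic_graphParam {f : ℝ → ℝ} {ε : ℝ} (hε : ε * ε = 1) {C : Finset ℝ}
    (hC : IsCup (ε • f) C) {m : ℕ} (e : Fin m → ℝ) (he : StrictMono e) (heC : ∀ i, e i ∈ C) :
    ∃ γ : Fin m → ℝ → E2,
      (∀ i, Injective (γ i) ∧ (∃ p v : E2, ∀ t : ℝ, γ i t = p + t • v) ∧
        Set.range (γ i) = graphLine (e i) (f (e i))) ∧
      ∀ i j k, j < k → j ≠ i → k ≠ i → ∀ s t : ℝ,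
        γ i s ∈ graphLine (e j) (f (e j)) → γ i t ∈ graphLine (e k) (f (e k)) → s < t := by
  -- Line `s` is run through with abscissa `-ε τ`; it then meets line `t` at the parameter
  -- `τ = slope (ε • f) s t`, which increases with `t` along the cup.
  have hε₀ : -ε ≠ 0 := neg_ne_zero.2 (left_ne_zero_of_mul_eq_one hε)
  have cross : ∀ i j, j ≠ i → ∀ s, graphParam (e i) (f (e i)) (-ε) s ∈ graphLine (e j) (f (e j)) →
      s = slope (ε • f) (e i) (e j) := by
    intro i j hji s hs
    have := eq_neg_slope_of_mem_graphLine (he.injective.ne hji.symm) (graphParam_mem s) hs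
    rw [graphParam_apply_zero] at this
    rw [slope_smul_fun]
    linear_combination (-ε) * this - s * hε
  refine ⟨fun i => graphParam (e i) (f (e i)) (-ε),
    fun i => ⟨graphParam_injective hε₀, ⟨_, _, fun t => rfl⟩, range_graphParam hε₀⟩, ?_⟩
  intro i j k hjk hji hki s t hs ht
  rw [cross i j hji s hs, cross i k hki t ht]
  exact hC.strictMonoOn_slope (heC i) ⟨heC j, he.injective.ne hji⟩ ⟨heC k, he.injective.ne hki⟩
    (he hjk)

lemma exists_graphLine_subfamily {ι : Type*} [Fintype ι] [Nonempty ι] {L : ι → Set E2}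
    (hL : ∀ i, IsLine (L i)) (hmeet : ∀ i j, i ≠ j → ∃! x, x ∈ L i ∩ L j) :
    ∃ A : Finset ℝ, Fintype.card ι ≤ #A + 1 ∧ ∃ (ℓ : ℝ → ι) (β : ℝ → ℝ),
      Set.InjOn ℓ A ∧ ∀ s ∈ A, L (ℓ s) = graphLine s (β s) := by
  classical
  set G := univ.filter fun i => ∃ a b, L i = graphLine a b
  choose! a b hab using fun i (hi : i ∈ G) => (mem_filter.1 hi).2
  have vertical : ∀ i ∈ Gᶜ, ∃ c, L i = {z : E2 | z 0 = c} := fun i hi =>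
    (hL i).eq_graphLine_or_vertical.resolve_left fun h =>
      mem_compl.1 hi (mem_filter.2 ⟨mem_univ _, h⟩)
  have hGc : #Gᶜ ≤ 1 := card_le_one.2 fun i hi j hj => by
    by_contra hij
    obtain ⟨c, hc⟩ := vertical i hi
    obtain ⟨c', hc'⟩ := vertical j hj
    exact not_existsUnique_mem_vertical_inter c c' (hc ▸ hc' ▸ hmeet i j hij)
  have ha : Set.InjOn a G := fun i hi j hj hij => by
    by_contra hne
    exact ne_of_existsUnique_mem_graphLine_inter (hab i hi ▸ hab j hj ▸ hmeet i j hne) hij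
  have hmem : ∀ s ∈ G.image a, ∃ i ∈ (G : Set ι), a i = s := fun s hs => by
    simpa using hs
  refine ⟨G.image a, ?_, invFunOn a G, b ∘ invFunOn a G, ?_, fun s hs => ?_⟩
  · rw [card_image_of_injOn ha, ← card_add_card_compl G]
    omega
  · rw [coe_image]
    exact invFunOn_injOn_image a G
  · rw [hab _ (invFunOn_mem (hmem s hs)), invFunOn_eq (hmem s hs), comp_apply]

theorem stmt9_general (m : ℕ) :
    ∃ N : ℕ, ∀ L : Fin N → Set E2,
      (∀ i, IsLine (L i)) →
      (∀ i j : Fin N, i ≠ j → ∃! x : E2, x ∈ L i ∩ L j) →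
      (∀ i j k : Fin N, i ≠ j → i ≠ k → j ≠ k →
        ∀ x : E2, ¬ (x ∈ L i ∧ x ∈ L j ∧ x ∈ L k)) →
      ∃ f : Fin m → Fin N, Function.Injective f ∧
        ∃ γ : Fin m → ℝ → E2,
          (∀ i : Fin m, Function.Injective (γ i) ∧
            (∃ p v : E2, ∀ t : ℝ, γ i t = p + t • v) ∧
            Set.range (γ i) = L (f i)) ∧
          (∀ i j k : Fin m, j < k → j ≠ i → k ≠ i →
            ∀ s t : ℝ, γ i s ∈ L (f j) → γ i t ∈ L (f k) → s < t) := by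
  obtain ⟨N, hN⟩ := exists_hasCupOrCap m m
  refine ⟨N + 1, fun L hL hmeet hconc => ?_⟩
  obtain ⟨A, hA, ℓ, β, hℓ, hLℓ⟩ := exists_graphLine_subfamily hL hmeet
  have hgp : NoThreeCollinear β A := fun s hs t ht u hu hst htu heq => by
    obtain ⟨z, hz⟩ := exists_mem_graphLine_of_slope_eq hst.ne htu.ne heq
    refine hconc (ℓ s) (ℓ t) (ℓ u) (hℓ.ne hs ht hst.ne) (hℓ.ne hs hu (hst.trans htu).ne)
      (hℓ.ne ht hu htu.ne) z ?_
    rwa [hLℓ s hs, hLℓ t ht, hLℓ u hu]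
  obtain ⟨ε, hε, C, hCA, hCm, hC⟩ : ∃ ε : ℝ, ε * ε = 1 ∧ ∃ C ⊆ A, #C = m ∧ IsCup (ε • β) C := by
    rcases hN β A (by simpa using hA) hgp with ⟨C, hC⟩ | ⟨C, hC⟩
    · exact ⟨1, one_mul 1, C, by simpa using hC⟩
    · exact ⟨-1, by norm_num, C, by simpa using hC⟩
  set e := C.orderEmbOfFin hCm
  have heA : ∀ i, e i ∈ A := fun i => hCA (C.orderEmbOfFin_mem hCm i)
  obtain ⟨γ, hγ, hcyc⟩ := exists_cyclic_graphParam hε hC e e.strictMono (C.orderEmbOfFin_mem hCm)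
  refine ⟨ℓ ∘ e, fun i j h => e.injective (hℓ (heA i) (heA j) h), γ, fun i => ?_,
    fun i j k hjk hji hki s t hs ht => ?_⟩
  · rw [comp_apply, hLℓ _ (heA i)]
    exact hγ i
  · rw [comp_apply, hLℓ _ (heA j)] at hs
    rw [comp_apply, hLℓ _ (heA k)] at ht
    exact hcyc i j k hjk hji hki s t hs ht

/-- For every `m ≥ 1` there is an `N` such that every family of `N` lines in the plane,
pairwise non-parallel (any two meeting in exactly one point) and with no three concurrent,
contains `m` lines `ℓ 1, …, ℓ m` admitting injective affine parametrizations `γ i` of `ℓ i`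
such that, for all `j < k` distinct from `i`, the parameter of the point `ℓ i ∩ ℓ j` is
smaller than the parameter of the point `ℓ i ∩ ℓ k` (a cyclic subarrangement of size `m`). -/
theorem stmt9 (m : ℕ) (hm : 1 ≤ m) :
    ∃ N : ℕ, ∀ L : Fin N → Set E2,
      (∀ i, IsLine (L i)) →
      (∀ i j : Fin N, i ≠ j → ∃! x : E2, x ∈ L i ∩ L j) →
      (∀ i j k : Fin N, i ≠ j → i ≠ k → j ≠ k →
        ∀ x : E2, ¬ (x ∈ L i ∧ x ∈ L j ∧ x ∈ L k)) →
      ∃ f : Fin m → Fin N, Function.Injective f ∧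
        ∃ γ : Fin m → ℝ → E2,
          (∀ i : Fin m, Function.Injective (γ i) ∧
            (∃ p v : E2, ∀ t : ℝ, γ i t = p + t • v) ∧
            Set.range (γ i) = L (f i)) ∧
          (∀ i j k : Fin m, j < k → j ≠ i → k ≠ i →
            ∀ s t : ℝ, γ i s ∈ L (f j) → γ i t ∈ L (f k) → s < t) :=
  stmt9_general m
end
end

section
/- Fix integers m ≥ 3 and i with 1 ≤ i ≤ m. Let w be a list of signed symbols (j, ε), with j ∈ {1, …, m} \ {i} and ε ∈ {+, −}, in which each of the 2(m−1) signed symbols occurs exactly once. Suppose: (i) for all k, ℓ with i < k < ℓ ≤ m, the sublist of w consisting of the symbols with index k or ℓ equals [(k,−), (ℓ,−), (ℓ,+), (k,+)]; (ii) for all j, ℓ with 1 ≤ j < i < ℓ ≤ m, the sublist of symbols with index j or ℓ equals [(j,+), (ℓ,−), (ℓ,+), (j,−)]; and (iii) for all j, k with 1 ≤ j < k < i, the sublist of symbols with index j or k equals [(j,+), (k,+), (k,−), (j,−)]. Then w equals the concatenation [(1,+), (2,+), …, (i−1,+)] ++ [(i+1,−), (i+2,−), …, (m,−)] ++ [(m,+),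 (m−1,+), …, (i+1,+)] ++ [(i−1,−), (i−2,−), …, (1,−)]. -/
/-!
Order the signed symbols by their position in the target code. Every pair condition says that
the sublist of `w` on two indices is sorted by this position, and every two symbols of `w`
(also two of the same index, since `m ≥ 3` leaves a second index besides `i`) lie together
in one such sublist. Hence `w` is sorted by position, and a sorted list of pairwise distinct
positions is determined by its set of entries.
-/

namespace List

theorem Sublist.rel_of_pairwise_filter {α : Type*} {R : α → α → Prop} {p : α → Bool}
    {l : List α} {a b : α} (hab : [a, b] <+ l) (ha : p a) (hb : p b)
    (h : (l.filter p).Pairwise R) : R a b := by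
  have hsub : [a, b] <+ l.filter p := by simpa [ha, hb] using hab.filter p
  exact pairwise_pair.1 (h.sublist hsub)

theorem pairwise_range_of_lt {R : ℕ → ℕ → Prop} {n : ℕ}
    (h : ∀ s t, s < t → t < n → R s t) : (range n).Pairwise R :=
  pairwise_lt_range.imp_of_mem fun _ ht hst => h _ _ hst (mem_range.1 ht)

theorem pairwise_four {α : Type*} {R : α → α → Prop} {a b c d : α} :
    [a, b, c, d].Pairwise R ↔ R a b ∧ R a c ∧ R a d ∧ R b c ∧ R b d ∧ R c d := by
  simp [and_assoc]

end List

namespace RainbowCode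

open scoped List

/-- `[1⁺:i⁺)(i⁻:m⁻][m⁺:i⁺)(i⁻:1⁻]`, the code of pseudocircle `i` in `𝒞²_m`. -/
def pseudocircleCode (m i : ℕ) : List (ℕ × Bool) :=
  ((List.range (i - 1)).map fun t => (t + 1, true))
    ++ ((List.range (m - i)).map fun t => (i + 1 + t, false))
    ++ ((List.range (m - i)).map fun t => (m - t, true))
    ++ ((List.range (i - 1)).map fun t => (i - 1 - t, false))

/-- The position of a symbol in `pseudocircleCode m i`, shifted by `2` so that no natural
subtraction truncates. -/
def codeRank (m i : ℕ) : ℕ × Bool → ℕ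
  | (j, true) => if j < i then j + 1 else 2 * m + 1 - j
  | (j, false) => if j < i then 2 * m - j else j

structure PairConditions (m i : ℕ) (w : List (ℕ × Bool)) : Prop where
  high : ∀ k l : ℕ, i < k → k < l → l ≤ m →
    w.filter (fun x => decide (x.1 = k ∨ x.1 = l)) =
      [(k, false), (l, false), (l, true), (k, true)]
  mixed : ∀ j l : ℕ, 1 ≤ j → j < i → i < l → l ≤ m →
    w.filter (fun x => decide (x.1 = j ∨ x.1 = l)) =
      [(j, true), (l, false), (l, true), (j, false)]
  low : ∀ j k : ℕ, 1 ≤ j → j < k → k < i →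
    w.filter (fun x => decide (x.1 = j ∨ x.1 = k)) =
      [(j, true), (k, true), (k, false), (j, false)]

variable {m i : ℕ}

theorem mem_pseudocircleCode (him : i ≤ m) {x : ℕ × Bool} :
    x ∈ pseudocircleCode m i ↔ 1 ≤ x.1 ∧ x.1 ≤ m ∧ x.1 ≠ i := by
  obtain ⟨j, ε⟩ := x
  simp only [pseudocircleCode, List.mem_append, List.mem_map, List.mem_range, Prod.mk.injEq]
  constructor
  · rintro (((⟨t, ht, rfl, -⟩ | ⟨t, ht, rfl, -⟩) | ⟨t, ht, rfl, -⟩) | ⟨t, ht, rfl, -⟩) <;>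
      omega
  · rintro ⟨hj1, hjm, hji⟩
    rcases Nat.lt_or_gt_of_ne hji with hj | hj <;> cases ε
    · exact .inr ⟨i - 1 - j, by omega, by omega, rfl⟩
    · exact .inl (.inl (.inl ⟨j - 1, by omega, by omega, rfl⟩))
    · exact .inl (.inl (.inr ⟨j - i - 1, by omega, by omega, rfl⟩))
    · exact .inl (.inr ⟨m - j, by omega, by omega, rfl⟩)

theorem pairwise_pseudocircleCode (him : i ≤ m) :
    (pseudocircleCode m i).Pairwise (codeRank m i · < codeRank m i ·) := by
  simp only [pseudocircleCode, List.pairwise_append, List.pairwise_map, List.forall_mem_append,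
    List.forall_mem_map, List.mem_range]
  repeat' apply And.intro
  all_goals first
    | refine List.pairwise_range_of_lt fun s t hst ht => ?_
    | intro s hs t ht
  all_goals simp only [codeRank]; split_ifs <;> omega

theorem PairConditions.pairwise_codeRank_filter {w : List (ℕ × Bool)}
    (hw : PairConditions m i w) (him : i ≤ m) {j k : ℕ} (hj : 1 ≤ j) (hk : 1 ≤ k) (hjm : j ≤ m) (hkm : k ≤ m)
    (hji : j ≠ i) (hki : k ≠ i) (hjk : j ≠ k) :
    (w.filter fun x => decide (x.1 = j ∨ x.1 = k)).Pairwise (codeRank m i · < codeRank m i ·) := by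
  wlog hlt : j < k generalizing j k
  · simpa only [or_comm] using this hk hj hkm hjm hki hji hjk.symm (by omega)
  rcases Nat.lt_or_gt_of_ne hki with hki | hik
  · rw [hw.low j k hj hlt hki, List.pairwise_four]
    simp only [codeRank]
    split_ifs <;> omega
  rcases Nat.lt_or_gt_of_ne hji with hji | hij
  · rw [hw.mixed j k hj hji hik hkm, List.pairwise_four]
    simp only [codeRank]
    split_ifs <;> omega
  · rw [hw.high j k hij hlt hkm, List.pairwise_four]
    simp only [codeRank]
    split_ifs <;> omega

theorem exists_index_ne (hm : 3 ≤ m) (j : ℕ) : ∃ k, 1 ≤ k ∧ k ≤ m ∧ k ≠ i ∧ k ≠ j := by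
  by_cases h1 : 1 ≠ i ∧ 1 ≠ j
  · exact ⟨1, le_rfl, by omega, h1⟩
  by_cases h2 : 2 ≠ i ∧ 2 ≠ j
  · exact ⟨2, by omega, by omega, h2⟩
  exact ⟨3, by omega, hm, by omega, by omega⟩

theorem codeRank_lt_of_sublist (hm : 3 ≤ m) (him : i ≤ m) {w : List (ℕ × Bool)}
    (hmem : ∀ x ∈ w, 1 ≤ x.1 ∧ x.1 ≤ m ∧ x.1 ≠ i)
    (hw : PairConditions m i w) {a b : ℕ × Bool} (hab : [a, b] <+ w) :
    codeRank m i a < codeRank m i b := by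
  obtain ⟨ha1, ham, hai⟩ := hmem a (hab.subset (by simp))
  obtain ⟨hb1, hbm, hbi⟩ := hmem b (hab.subset (by simp))
  by_cases hab' : a.1 = b.1
  · obtain ⟨k, hk1, hkm, hki, hka⟩ := exists_index_ne hm a.1
    exact hab.rel_of_pairwise_filter (p := fun x => decide (x.1 = a.1 ∨ x.1 = k))
      (by simp) (by simp [hab'])
      (hw.pairwise_codeRank_filter him ha1 hk1 ham hkm hai hki (Ne.symm hka))
  · exact hab.rel_of_pairwise_filter (by simp) (by simp)
      (hw.pairwise_codeRank_filter him ha1 hb1 ham hbm hai hbi hab')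

end RainbowCode

open RainbowCode in
theorem stmt12_general (m i : ℕ) (hm : 3 ≤ m) (him : i ≤ m)
    (w : List (ℕ × Bool))
    (hmem : ∀ x ∈ w, 1 ≤ x.1 ∧ x.1 ≤ m ∧ x.1 ≠ i)
    (hcount : ∀ j : ℕ, 1 ≤ j → j ≤ m → j ≠ i → ∀ ε : Bool, w.count (j, ε) = 1)
    (h1 : ∀ k l : ℕ, i < k → k < l → l ≤ m →
      w.filter (fun x => decide (x.1 = k ∨ x.1 = l)) =
        [(k, false), (l, false), (l, true), (k, true)])
    (h2 : ∀ j l : ℕ, 1 ≤ j → j < i → i < l → l ≤ m →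
      w.filter (fun x => decide (x.1 = j ∨ x.1 = l)) =
        [(j, true), (l, false), (l, true), (j, false)])
    (h3 : ∀ j k : ℕ, 1 ≤ j → j < k → k < i →
      w.filter (fun x => decide (x.1 = j ∨ x.1 = k)) =
        [(j, true), (k, true), (k, false), (j, false)]) :
    w = ((List.range (i - 1)).map fun t => (t + 1, true))
      ++ ((List.range (m - i)).map fun t => (i + 1 + t, false))
      ++ ((List.range (m - i)).map fun t => (m - t, true))
      ++ ((List.range (i - 1)).map fun t => (i - 1 - t, false)) := by
  have hsorted : w.Pairwise (codeRank m i · < codeRank m i ·) :=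
    List.pairwise_iff_forall_sublist.2 (codeRank_lt_of_sublist hm him hmem ⟨h1, h2, h3⟩)
  have hcode : w.Perm (pseudocircleCode m i) := by
    refine (List.perm_ext_iff_of_nodup (hsorted.imp fun h => ne_of_apply_ne _ h.ne)
      ((pairwise_pseudocircleCode him).imp fun h => ne_of_apply_ne _ h.ne)).2 fun x => ?_
    rw [mem_pseudocircleCode him]
    refine ⟨hmem x, fun ⟨hx1, hxm, hxi⟩ => List.count_pos_iff.1 ?_⟩
    rw [hcount x.1 hx1 hxm hxi x.2]
    exact Nat.one_pos
  exact hcode.eq_of_pairwise (fun _ _ _ _ hab hba => absurd (hab.trans hba) (lt_irrefl _))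
    hsorted (pairwise_pseudocircleCode him)

/-- Signed symbols `(j, ε)` with `ε = true` for `+` and `ε = false` for `−`.
Fix `m ≥ 3` and `1 ≤ i ≤ m`.  If `w` is a list in which each signed symbol `(j, ε)` with
`j ∈ {1, …, m} \ {i}` occurs exactly once, and the sublists on the index pairs are as in the
colour-1 case ((i) `[(k,−),(ℓ,−),(ℓ,+),(k,+)]` for `i < k < ℓ ≤ m`, (ii)
`[(j,+),(ℓ,−),(ℓ,+),(j,−)]` for `j < i < ℓ`, (iii) `[(j,+),(k,+),(k,−),(j,−)]` for
`j < k < i`), then `w` is the code `[1⁺:i⁺)(i⁻:m⁻][m⁺:i⁺)(i⁻:1⁻]`. -/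
theorem stmt12 (m i : ℕ) (hm : 3 ≤ m) (hi1 : 1 ≤ i) (him : i ≤ m)
    (w : List (ℕ × Bool))
    (hmem : ∀ x ∈ w, 1 ≤ x.1 ∧ x.1 ≤ m ∧ x.1 ≠ i)
    (hcount : ∀ j : ℕ, 1 ≤ j → j ≤ m → j ≠ i → ∀ ε : Bool, w.count (j, ε) = 1)
    (h1 : ∀ k l : ℕ, i < k → k < l → l ≤ m →
      w.filter (fun x => decide (x.1 = k ∨ x.1 = l)) =
        [(k, false), (l, false), (l, true), (k, true)])
    (h2 : ∀ j l : ℕ, 1 ≤ j → j < i → i < l → l ≤ m →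
      w.filter (fun x => decide (x.1 = j ∨ x.1 = l)) =
        [(j, true), (l, false), (l, true), (j, false)])
    (h3 : ∀ j k : ℕ, 1 ≤ j → j < k → k < i →
      w.filter (fun x => decide (x.1 = j ∨ x.1 = k)) =
        [(j, true), (k, true), (k, false), (j, false)]) :
    w = ((List.range (i - 1)).map fun t => (t + 1, true))
      ++ ((List.range (m - i)).map fun t => (i + 1 + t, false))
      ++ ((List.range (m - i)).map fun t => (m - t, true))
      ++ ((List.range (i - 1)).map fun t => (i - 1 - t, false)) :=
  stmt12_general m i hm him w hmem hcount h1 h2 h3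
end

section
/- Fix integers m ≥ 3 and i with 1 ≤ i ≤ m. Let w be a list of signed symbols (j, ε), with j ∈ {1, …, m} \ {i} and ε ∈ {+, −}, in which each of the 2(m−1) signed symbols occurs exactly once. Suppose: (i) for all k, ℓ with i < k < ℓ ≤ m, the sublist of w consisting of the symbols with index k or ℓ equals [(k,−), (ℓ,−), (ℓ,+), (k,+)]; (ii) for all j, ℓ with 1 ≤ j < i < ℓ ≤ m, the sublist of symbols with index j or ℓ equals [(j,+), (j,−), (ℓ,−), (ℓ,+)]; and (iii) for all j, k with 1 ≤ j < k < i, the sublist of symbols with index j or k equals [(j,+), (j,−), (k,+), (k,−)]. Then w equals the concatenation [(1,+), (1,−), (2,+), (2,−), …, (i−1,+), (i−1,−)] ++ [(i+1,−), (i+2,−), …, (m,−)] ++ [(m,+), (m−1,+), …, (i+1,+)]. -/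
/-!
Let `rank m i x` be the position of the symbol `x` in the target code. The target lists every
admissible symbol once and is strictly increasing in `rank`, and so is each of the prescribed
pair sublists. Since any two entries of `w` lie in a common pair sublist (entries with the same
index are compared through a third index, which exists as `m ≥ 3`), `w` is strictly increasing in
`rank` too. By the counting hypothesis `w` is a permutation of the target, and a permutation of a
strictly sorted list that is itself strictly sorted is that list.
-/

theorem List.pairwise_of_forall_sublist_filter {α : Type*} {R : α → α → Prop} {l : List α}
    (h : ∀ a b, [a, b].Sublist l → ∃ p : α → Bool, p a ∧ p b ∧ (l.filter p).Pairwise R) :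
    l.Pairwise R := by
  refine List.pairwise_iff_forall_sublist.mpr fun {a b} hab => ?_
  obtain ⟨p, ha, hb, hp⟩ := h a b hab
  have hsub : [a, b].Sublist (l.filter p) := by simpa [ha, hb] using hab.filter p
  exact List.pairwise_pair.mp (hp.sublist hsub)

theorem List.pairwise_range_of_lt_s13 {R : ℕ → ℕ → Prop} {n : ℕ}
    (h : ∀ a b, a < b → b < n → R a b) : (List.range n).Pairwise R :=
  List.pairwise_lt_range.imp_of_mem fun _ hb hab => h _ _ hab (List.mem_range.1 hb)

namespace Colour2Code

def pairSublist {β : Type*} (w : List (ℕ × β)) (j k : ℕ) : List (ℕ × β) :=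
  w.filter fun x => decide (x.1 = j ∨ x.1 = k)

theorem pairSublist_comm {β : Type*} (w : List (ℕ × β)) (j k : ℕ) :
    pairSublist w j k = pairSublist w k j := by
  simp only [pairSublist, or_comm]

theorem pairwise_of_pairwise_pairSublist {β : Type*} {R : ℕ × β → ℕ × β → Prop}
    {w : List (ℕ × β)} (S : Set ℕ) (hS : ∀ a, ∃ c ∈ S, c ≠ a) (hmem : ∀ x ∈ w, x.1 ∈ S)
    (hpair : ∀ j ∈ S, ∀ k ∈ S, j ≠ k → (pairSublist w j k).Pairwise R) :
    w.Pairwise R := by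
  refine List.pairwise_of_forall_sublist_filter fun a b hab => ?_
  have ha := hmem a (hab.subset (by simp))
  have hb := hmem b (hab.subset (by simp))
  by_cases hab' : a.1 = b.1
  · obtain ⟨c, hc, hca⟩ := hS a.1
    exact ⟨_, by simp, by simp [hab'], hpair a.1 ha c hc hca.symm⟩
  · exact ⟨_, by simp, by simp, hpair a.1 ha b.1 hb hab'⟩

-- The code `[1⁺1⁻:i⁺i⁻)(i⁻:m⁻][m⁺:i⁺)`, with `true` for `+` and `false` for `−`.
def code (m i : ℕ) : List (ℕ × Bool) :=
  ((List.range (i - 1)).flatMap fun t => [(t + 1, true), (t + 1, false)])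
    ++ ((List.range (m - i)).map fun t => (i + 1 + t, false))
    ++ ((List.range (m - i)).map fun t => (m - t, true))

-- The (0-based) position of a symbol in `code m i`.
def rank (m i : ℕ) (x : ℕ × Bool) : ℕ :=
  if x.1 < i then 2 * (x.1 - 1) + (if x.2 then 0 else 1)
  else 2 * (i - 1) + (if x.2 then (m - i) + (m - x.1) else x.1 - i - 1)

def RankLT (m i : ℕ) (a b : ℕ × Bool) : Prop := rank m i a < rank m i b

def indexSet (m i : ℕ) : Set ℕ := {j | 1 ≤ j ∧ j ≤ m ∧ j ≠ i}

variable {m i : ℕ}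

theorem mem_code_iff (him : i ≤ m) {x : ℕ × Bool} :
    x ∈ code m i ↔ x.1 ∈ indexSet m i := by
  obtain ⟨j, ε⟩ := x
  simp only [code, indexSet, Set.mem_ofPred_eq, List.mem_append, List.mem_flatMap,
    List.mem_range, List.mem_map, List.mem_cons, List.not_mem_nil, or_false, Prod.mk.injEq]
  constructor
  · rintro ((⟨t, ht, (⟨rfl, rfl⟩ | ⟨rfl, rfl⟩)⟩) | ⟨t, ht, rfl, rfl⟩ | ⟨t, ht, rfl, rfl⟩) <;> omega
  · rintro ⟨hj1, hjm, hji⟩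
    rcases Nat.lt_or_gt_of_ne hji with hlt | hgt
    · exact Or.inl (Or.inl ⟨j - 1, by omega, by grind⟩)
    · cases ε
      · exact Or.inl (Or.inr ⟨j - (i + 1), by omega, by omega, rfl⟩)
      · exact Or.inr ⟨m - j, by omega, by omega, rfl⟩

theorem code_pairwise : (code m i).Pairwise (RankLT m i) := by
  simp only [code, List.pairwise_append, List.pairwise_flatMap, List.pairwise_map,
    List.mem_append, List.mem_flatMap, List.mem_map, List.mem_range, List.mem_cons,
    List.not_mem_nil, or_false, List.pairwise_pair]
  refine ⟨⟨⟨fun t ht => ?_, List.pairwise_range_of_lt_s13 fun s t hst ht => ?_⟩,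
    List.pairwise_range_of_lt_s13 fun s t hst ht => ?_, ?_⟩,
    List.pairwise_range_of_lt_s13 fun s t hst ht => ?_, ?_⟩
  all_goals
    intros
    grind [RankLT, rank]

theorem code_nodup : (code m i).Nodup :=
  code_pairwise.imp fun h => ne_of_apply_ne (rank m i) (Nat.ne_of_lt h)

theorem perm_code {w : List (ℕ × Bool)} (him : i ≤ m)
    (hmem : ∀ x ∈ w, x.1 ∈ indexSet m i)
    (hcount : ∀ j : ℕ, 1 ≤ j → j ≤ m → j ≠ i → ∀ ε : Bool, w.count (j, ε) = 1) :
    w.Perm (code m i) := by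
  have hnodup : w.Nodup := List.nodup_iff_count_le_one.2 fun x => by
    by_cases hx : x ∈ w
    · obtain ⟨hj1, hjm, hji⟩ := hmem x hx
      exact (hcount x.1 hj1 hjm hji x.2).le
    · simp [List.count_eq_zero.2 hx]
  refine (List.perm_ext_iff_of_nodup hnodup code_nodup).2 fun x => ?_
  rw [mem_code_iff him]
  refine ⟨hmem x, fun ⟨hj1, hjm, hji⟩ => List.count_pos_iff.1 ?_⟩
  rw [hcount x.1 hj1 hjm hji x.2]
  exact Nat.one_pos

theorem exists_mem_indexSet_ne (hm : 3 ≤ m) (a : ℕ) : ∃ c ∈ indexSet m i, c ≠ a := by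
  by_cases h₁ : 1 ≠ i ∧ 1 ≠ a
  · exact ⟨1, ⟨le_rfl, by omega, h₁.1⟩, h₁.2⟩
  by_cases h₂ : 2 ≠ i ∧ 2 ≠ a
  · exact ⟨2, ⟨by omega, by omega, h₂.1⟩, h₂.2⟩
  exact ⟨3, ⟨by omega, hm, by omega⟩, by omega⟩

theorem pairwise_rankLT {w : List (ℕ × Bool)} (hm : 3 ≤ m)
    (hmem : ∀ x ∈ w, x.1 ∈ indexSet m i)
    (h1 : ∀ k l : ℕ, i < k → k < l → l ≤ m →
      pairSublist w k l = [(k, false), (l, false), (l, true), (k, true)])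
    (h2 : ∀ j l : ℕ, 1 ≤ j → j < i → i < l → l ≤ m →
      pairSublist w j l = [(j, true), (j, false), (l, false), (l, true)])
    (h3 : ∀ j k : ℕ, 1 ≤ j → j < k → k < i →
      pairSublist w j k = [(j, true), (j, false), (k, true), (k, false)]) :
    w.Pairwise (RankLT m i) := by
  have sorted_of_lt : ∀ j ∈ indexSet m i, ∀ k ∈ indexSet m i, j < k →
      (pairSublist w j k).Pairwise (RankLT m i) := by
    rintro j ⟨hj1, hjm, hji⟩ k ⟨-, hkm, hki⟩ hjk
    rcases Nat.lt_or_gt_of_ne hki with hki | hik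
    · rw [h3 j k hj1 hjk hki]
      grind [RankLT, rank]
    rcases Nat.lt_or_gt_of_ne hji with hji | hij
    · rw [h2 j k hj1 hji hik hkm]
      grind [RankLT, rank]
    · rw [h1 j k hij hjk hkm]
      grind [RankLT, rank]
  refine pairwise_of_pairwise_pairSublist _ (exists_mem_indexSet_ne hm) hmem fun j hj k hk hjk => ?_
  rcases Nat.lt_or_gt_of_ne hjk with hlt | hgt
  · exact sorted_of_lt j hj k hk hlt
  · rw [pairSublist_comm]
    exact sorted_of_lt k hk j hj hgt

end Colour2Code

theorem stmt13_general (m i : ℕ) (hm : 3 ≤ m) (him : i ≤ m)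
    (w : List (ℕ × Bool))
    (hmem : ∀ x ∈ w, 1 ≤ x.1 ∧ x.1 ≤ m ∧ x.1 ≠ i)
    (hcount : ∀ j : ℕ, 1 ≤ j → j ≤ m → j ≠ i → ∀ ε : Bool, w.count (j, ε) = 1)
    (h1 : ∀ k l : ℕ, i < k → k < l → l ≤ m →
      w.filter (fun x => decide (x.1 = k ∨ x.1 = l)) =
        [(k, false), (l, false), (l, true), (k, true)])
    (h2 : ∀ j l : ℕ, 1 ≤ j → j < i → i < l → l ≤ m →
      w.filter (fun x => decide (x.1 = j ∨ x.1 = l)) =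
        [(j, true), (j, false), (l, false), (l, true)])
    (h3 : ∀ j k : ℕ, 1 ≤ j → j < k → k < i →
      w.filter (fun x => decide (x.1 = j ∨ x.1 = k)) =
        [(j, true), (j, false), (k, true), (k, false)]) :
    w = ((List.range (i - 1)).flatMap fun t => [(t + 1, true), (t + 1, false)])
      ++ ((List.range (m - i)).map fun t => (i + 1 + t, false))
      ++ ((List.range (m - i)).map fun t => (m - t, true)) := by
  have hsorted := Colour2Code.pairwise_rankLT hm hmem h1 h2 h3
  exact (Colour2Code.perm_code him hmem hcount).eq_of_pairwise
    (fun _ _ _ _ hab hba => absurd (hab.trans hba) (lt_irrefl _)) hsorted Colour2Code.code_pairwise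

/-- Signed symbols `(j, ε)` with `ε = true` for `+` and `ε = false` for `−`.
Fix `m ≥ 3` and `1 ≤ i ≤ m`.  If `w` is a list in which each signed symbol `(j, ε)` with
`j ∈ {1, …, m} \ {i}` occurs exactly once, and the sublists on the index pairs are as in the
colour-2 case ((i) `[(k,−),(ℓ,−),(ℓ,+),(k,+)]` for `i < k < ℓ ≤ m`, (ii)
`[(j,+),(j,−),(ℓ,−),(ℓ,+)]` for `j < i < ℓ`, (iii) `[(j,+),(j,−),(k,+),(k,−)]` for
`j < k < i`), then `w` is the code `[1⁺1⁻:i⁺i⁻)(i⁻:m⁻][m⁺:i⁺)`. -/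
theorem stmt13 (m i : ℕ) (hm : 3 ≤ m) (hi1 : 1 ≤ i) (him : i ≤ m)
    (w : List (ℕ × Bool))
    (hmem : ∀ x ∈ w, 1 ≤ x.1 ∧ x.1 ≤ m ∧ x.1 ≠ i)
    (hcount : ∀ j : ℕ, 1 ≤ j → j ≤ m → j ≠ i → ∀ ε : Bool, w.count (j, ε) = 1)
    (h1 : ∀ k l : ℕ, i < k → k < l → l ≤ m →
      w.filter (fun x => decide (x.1 = k ∨ x.1 = l)) =
        [(k, false), (l, false), (l, true), (k, true)])
    (h2 : ∀ j l : ℕ, 1 ≤ j → j < i → i < l → l ≤ m →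
      w.filter (fun x => decide (x.1 = j ∨ x.1 = l)) =
        [(j, true), (j, false), (l, false), (l, true)])
    (h3 : ∀ j k : ℕ, 1 ≤ j → j < k → k < i →
      w.filter (fun x => decide (x.1 = j ∨ x.1 = k)) =
        [(j, true), (j, false), (k, true), (k, false)]) :
    w = ((List.range (i - 1)).flatMap fun t => [(t + 1, true), (t + 1, false)])
      ++ ((List.range (m - i)).map fun t => (i + 1 + t, false))
      ++ ((List.range (m - i)).map fun t => (m - t, true)) :=
  stmt13_general m i hm him w hmem hcount h1 h2 h3
end

section
/- Fix an integer p ≥ 2. Let w be a list over the alphabet {2, 3, …, p} in which each symbol occurs exactly twice (so w has length 2(p−1)). Suppose that for all k, ℓ with 2 ≤ k < ℓ ≤ p, the sublist of w consisting of the occurrences of k and ℓ equals [k, ℓ, ℓ, k]. Then w equals the concatenation [2, 3, …, p] ++ [p, p−1, …, 3, 2]. -/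
/-!
Peel off the outermost symbol. If the alphabet is `x :: L`, then for every `y ∈ L` the pattern
`[x, y, y, x]` forbids `y` from being the first or the last letter of `w`, so `w` begins and
ends with `x`; as `x` occurs only twice, `w = x :: (b ++ [x])`, and `b` again satisfies the
hypotheses over the alphabet `L`.
-/

namespace List

variable {α : Type*}

theorem exists_eq_cons_append_singleton {w : List α} {x : α} (hhead : w.head? = some x)
    (hlast : w.getLast? = some x) (hlen : 2 ≤ w.length) : ∃ b, w = x :: (b ++ [x]) := by
  obtain ⟨w', rfl⟩ := head?_eq_some_iff.1 hhead
  have hw' : w' ≠ [] := ne_nil_of_length_pos (by simp only [length_cons] at hlen; omega)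
  rw [getLast?_cons, getLast?_eq_some_getLast hw', Option.getD_some] at hlast
  obtain ⟨b, rfl⟩ := getLast?_eq_some_iff.1 (by rw [getLast?_eq_some_getLast hw', ← hlast])
  exact ⟨b, rfl⟩

variable [DecidableEq α]

/-- Pattern (iii) of the pair `k, l` in `w`. -/
def IsNested (w : List α) (k l : α) : Prop :=
  w.filter (fun z => z = k ∨ z = l) = [k, l, l, k]

theorem IsNested.reverse {w : List α} {k l : α} (h : IsNested w k l) :
    IsNested w.reverse k l := by
  rw [IsNested, filter_reverse, h]
  rfl

theorem IsNested.of_cons_append_singleton {w : List α} {x k l : α} (hk : k ≠ x) (hl : l ≠ x)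
    (h : IsNested (x :: (w ++ [x])) k l) : IsNested w k l := by
  have hx : ¬(x = k ∨ x = l) := by tauto
  simpa [IsNested, filter_cons, filter_append, hx] using h

theorem head?_eq_of_isNested {w L : List α} {x : α} (hw : w ≠ []) (hx : x ∉ L)
    (hmem : ∀ z ∈ w, z ∈ x :: L) (hnest : ∀ y ∈ L, IsNested w x y) : w.head? = some x := by
  obtain ⟨z, w', rfl⟩ := exists_cons_of_ne_nil hw
  rcases mem_cons.1 (hmem z mem_cons_self) with rfl | hz
  · rfl
  · have h := hnest z hz
    simp only [IsNested, filter_cons, or_true, decide_true, if_true, cons.injEq] at h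
    exact absurd (h.1 ▸ hz) hx

theorem eq_append_reverse_of_pairwise_isNested {L w : List α} (hL : L.Nodup)
    (hmem : ∀ z ∈ w, z ∈ L) (hcount : ∀ s ∈ L, w.count s = 2)
    (hnest : L.Pairwise (IsNested w)) : w = L ++ L.reverse := by
  induction L generalizing w with
  | nil => simpa [eq_nil_iff_forall_not_mem] using hmem
  | cons x L ih =>
    obtain ⟨hxL, hL⟩ := nodup_cons.1 hL
    obtain ⟨hxnest, hnest⟩ := pairwise_cons.1 hnest
    have hcx : w.count x = 2 := hcount x mem_cons_self
    have hlen : 2 ≤ w.length := hcx ▸ count_le_length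
    have hw : w ≠ [] := ne_nil_of_length_pos (by omega)
    have hhead := head?_eq_of_isNested hw hxL hmem hxnest
    have hlast : w.getLast? = some x := by
      rw [← head?_reverse]
      exact head?_eq_of_isNested (by simpa using hw) hxL (fun z hz => hmem z (mem_reverse.1 hz))
        fun y hy => (hxnest y hy).reverse
    obtain ⟨b, rfl⟩ := exists_eq_cons_append_singleton hhead hlast hlen
    have hxb : x ∉ b := by
      rw [← count_eq_zero]
      simpa [count_append] using hcx
    have hne : ∀ s ∈ L, s ≠ x := fun s hs h => hxL (h ▸ hs)
    have hb : b = L ++ L.reverse := by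
      refine ih hL (fun z hz => ?_) (fun s hs => ?_) ?_
      · exact (mem_cons.1 (hmem z (by simp [hz]))).resolve_left fun h => hxb (h ▸ hz)
      · simpa [count_cons, count_append, (hne s hs).symm] using hcount s (mem_cons_of_mem x hs)
      · exact hnest.imp_of_mem fun hk hl h => h.of_cons_append_singleton (hne _ hk) (hne _ hl)
    simp [hb]

end List

theorem stmt14_general (p : ℕ) (w : List ℕ)
    (hmem : ∀ x ∈ w, 2 ≤ x ∧ x ≤ p)
    (hcount : ∀ s : ℕ, 2 ≤ s → s ≤ p → w.count s = 2)
    (hpat : ∀ k l : ℕ, 2 ≤ k → k < l → l ≤ p →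
      w.filter (fun x => decide (x = k ∨ x = l)) = [k, l, l, k]) :
    w = ((List.range (p - 1)).map fun t => t + 2)
      ++ ((List.range (p - 1)).map fun t => p - t) := by
  have hasc : ((List.range (p - 1)).map fun t => t + 2) = List.range' 2 (p - 1) := by
    simp only [List.range'_eq_map_range, Nat.add_comm]
  have hdesc : ((List.range (p - 1)).map fun t => p - t) = (List.range' 2 (p - 1)).reverse := by
    rw [List.reverse_range']
    exact List.map_congr_left fun t ht => by simp only [List.mem_range] at ht; omega
  rw [hasc, hdesc]
  refine List.eq_append_reverse_of_pairwise_isNested List.nodup_range'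
    (fun z hz => ?_) (fun s hs => ?_)
    (List.Pairwise.imp_of_mem (fun hk hl hkl => ?_) List.pairwise_lt_range')
  · have := hmem z hz
    exact List.mem_range'_1.2 (by omega)
  · obtain ⟨h2, hsp⟩ := List.mem_range'_1.1 hs
    exact hcount s h2 (by omega)
  · obtain ⟨hk2, -⟩ := List.mem_range'_1.1 hk
    obtain ⟨-, hlp⟩ := List.mem_range'_1.1 hl
    exact hpat _ _ hk2 hkl (by omega)

/-- Fix `p ≥ 2`.  If `w` is a list over the alphabet `{2, 3, …, p}` in which each symbol
occurs exactly twice, and for all `2 ≤ k < ℓ ≤ p` the sublist of `w` on the symbols `k, ℓ`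
is `[k, ℓ, ℓ, k]`, then `w` is the rainbow word `[2, 3, …, p] ++ [p, p−1, …, 3, 2]`. -/
theorem stmt14 (p : ℕ) (hp : 2 ≤ p) (w : List ℕ)
    (hmem : ∀ x ∈ w, 2 ≤ x ∧ x ≤ p)
    (hcount : ∀ s : ℕ, 2 ≤ s → s ≤ p → w.count s = 2)
    (hpat : ∀ k l : ℕ, 2 ≤ k → k < l → l ≤ p →
      w.filter (fun x => decide (x = k ∨ x = l)) = [k, l, l, k]) :
    w = ((List.range (p - 1)).map fun t => t + 2)
      ++ ((List.range (p - 1)).map fun t => p - t) :=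
  stmt14_general p w hmem hcount hpat
end
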